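/- arXiv:1603.00650 — 6 statements merged into one kernel-verified Lean document; each statement's English description precedes it below -/
import Mathlib

section
/- Let P = ∏_{n=1}^∞ X_n be a product of a sequence of completely regular (Tychonoff) spaces, let X ⊆ P be a subspace such that either P is perfectly normal or X is Lindelöf, and let Y be a path-connected topological space. Then every function f : X → Y of the first Lebesgue class whose image f(X) is countable and discrete (as a subspace of Y) is the pointwise limit of a sequence of functions from CF(X,Y). -/
open Filter Topology

/-- A map on a subspace `S` of a countable product depends on finitely many coordinates. -/
def FinDetOn {X : ℕ → Type*} {Y : Type*} (S : Set (∀ n, X n)) (f : S → Y) : Prop :=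
  ∃ N : ℕ, ∀ x y : S, (∀ i ≤ N, (x : ∀ n, X n) i = (y : ∀ n, X n) i) → f x = f y

/-- A set `A` is an F_σ-set: a countable union of closed sets. -/
def IsFsigma {X : Type*} [TopologicalSpace X] (A : Set X) : Prop :=
  ∃ F : ℕ → Set X, (∀ n, IsClosed (F n)) ∧ A = ⋃ n, F n

/-- A map is of the first Lebesgue class: preimages of open sets are F_σ. -/
def LebesgueOne {X Y : Type*} [TopologicalSpace X] [TopologicalSpace Y] (f : X → Y) : Prop :=
  ∀ V : Set Y, IsOpen V → IsFsigma (f ⁻¹' V)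

/-- A metric space is an R-space. -/
def IsRSpace (Y : Type*) [MetricSpace Y] : Prop :=
  ∀ ε : ℝ, 0 < ε → ∃ r : Y × Y → Y, Continuous r ∧
    (∀ y z : Y, dist y z ≤ ε → r (y, z) = y) ∧ ∀ y z : Y, dist (r (y, z)) z ≤ ε

open Set

theorem isFsigma_univ {Z : Type*} [TopologicalSpace Z] : IsFsigma (Set.univ : Set Z) :=
  ⟨fun _ => Set.univ, fun _ => isClosed_univ, (Set.iUnion_const Set.univ).symm⟩

theorem IsFsigma.inter' {Z : Type*} [TopologicalSpace Z] {A B : Set Z}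
    (hA : IsFsigma A) (hB : IsFsigma B) : IsFsigma (A ∩ B) := by
  obtain ⟨F, hF, rfl⟩ := hA
  obtain ⟨G, hG, rfl⟩ := hB
  refine ⟨fun n => F (Nat.unpair n).1 ∩ G (Nat.unpair n).2,
    fun n => (hF _).inter (hG _), ?_⟩
  ext x
  simp only [Set.mem_inter_iff, Set.mem_iUnion]
  constructor
  · rintro ⟨⟨i, hi⟩, ⟨j, hj⟩⟩
    exact ⟨Nat.pair i j, by simpa [Nat.unpair_pair] using ⟨hi, hj⟩⟩
  · rintro ⟨n, h1, h2⟩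
    exact ⟨⟨_, h1⟩, ⟨_, h2⟩⟩

theorem cozero_at_point {X : ℕ → Type*} [∀ n, TopologicalSpace (X n)] [∀ n, T35Space (X n)]
    {U : Set (∀ n, X n)} (hU : IsOpen U) {x : ∀ n, X n} (hx : x ∈ U) :
    ∃ (h : (∀ n, X n) → ℝ) (N : ℕ), Continuous h ∧
      (∀ z w, (∀ i ≤ N, z i = w i) → h z = h w) ∧
      (∀ z, 0 ≤ h z) ∧ (∀ z, 0 < h z → z ∈ U) ∧ 0 < h x := by
  classical
  obtain ⟨I, u, hu, hsub⟩ := isOpen_pi_iff.1 hU x hx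
  have key : ∀ a : ℕ, ∃ φ : X a → ℝ, Continuous φ ∧ (∀ t, 0 ≤ φ t) ∧
      (∀ t, 0 < φ t → a ∈ I → t ∈ u a) ∧ 0 < φ (x a) := by
    intro a
    by_cases ha : a ∈ I
    · obtain ⟨f, hfc, hfx, hfK⟩ := CompletelyRegularSpace.completely_regular (x a) (u a)ᶜ
        (hu a ha).1.isClosed_compl (by simp [(hu a ha).2])
      refine ⟨fun t => 1 - (f t : ℝ), by
          exact continuous_const.sub (continuous_subtype_val.comp hfc), ?_, ?_, ?_⟩
      · intro t; have := (f t).2.2; simp only [sub_nonneg]; exact this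
      · intro t ht _
        by_contra hcon
        have h1 : f t = 1 := hfK hcon
        have ht' : (0:ℝ) < 1 - (f t : ℝ) := ht
        rw [h1] at ht'
        norm_num at ht'
      · show (0:ℝ) < 1 - (f (x a) : ℝ)
        rw [hfx]; norm_num
    · exact ⟨fun _ => 1, continuous_const, fun _ => zero_le_one,
        fun t _ hmem => absurd hmem ha, zero_lt_one⟩
  choose φ hφc hφnn hφcoz hφpos using key
  refine ⟨fun z => ∏ a ∈ I, φ a (z a), I.sup id, ?_, ?_, ?_, ?_, ?_⟩
  · exact continuous_finset_prod _ fun a _ => (hφc a).comp (continuous_apply a)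
  · intro z w hzw
    exact Finset.prod_congr rfl fun a ha => by
      rw [hzw a (Finset.le_sup (f := id) ha)]
  · intro z; exact Finset.prod_nonneg fun a _ => hφnn a (z a)
  · intro z hz
    refine hsub fun a ha => ?_
    have ha' : a ∈ I := ha
    refine hφcoz a (z a) ?_ ha'
    rcases lt_or_eq_of_le (hφnn a (z a)) with h | h
    · exact h
    · exfalso
      have hz' : (0:ℝ) < ∏ a ∈ I, φ a (z a) := hz
      rw [Finset.prod_eq_zero ha' h.symm] at hz'
      exact lt_irrefl 0 hz'
  · exact Finset.prod_pos fun a _ => hφpos a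

theorem pn_cover {X : ℕ → Type*} [∀ n, TopologicalSpace (X n)]
    [PerfectlyNormalSpace (∀ n, X n)]
    {U : Set (∀ n, X n)} (hU : IsOpen U) :
    ∃ q : ℕ → (∀ n, X n) → ℝ, (∀ l, Continuous (q l) ∧
      (∃ N, ∀ z w, (∀ i ≤ N, z i = w i) → q l z = q l w) ∧
      (∀ z, 0 ≤ q l z) ∧ (∀ z, 0 < q l z → z ∈ U)) ∧
      ∀ z ∈ U, ∃ l, 0 < q l z := by
  classical
  by_cases hne : Nonempty (∀ n, X n)
  swap
  · exact ⟨fun _ _ => 0, fun l => ⟨continuous_const, ⟨0, fun _ _ _ => rfl⟩,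
      fun _ => le_refl 0, fun z h => absurd h (lt_irrefl 0)⟩,
      fun z _ => absurd (Nonempty.intro z) hne⟩
  obtain ⟨a⟩ := hne
  -- the N-determined open kernel
  set W : ℕ → Set (∀ n, X n) := fun N =>
    ⋃₀ {B | (∃ V : ∀ i, Set (X i), (∀ i, IsOpen (V i)) ∧
      B = {z | ∀ i ≤ N, z i ∈ V i}) ∧ B ⊆ U} with hW
  have w_open : ∀ N, IsOpen (W N) := by
    intro N
    apply isOpen_sUnion
    rintro B ⟨⟨V, hVopen, rfl⟩, -⟩
    have : {z : ∀ n, X n | ∀ i ≤ N, z i ∈ V i} =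
        ⋂ i ∈ Finset.range (N + 1), (fun z : ∀ n, X n => z i) ⁻¹' V i := by
      ext z; simp [Nat.lt_succ_iff]
    rw [this]
    exact isOpen_biInter_finset fun i _ => (hVopen i).preimage (continuous_apply i)
  have w_sub : ∀ N, W N ⊆ U := by
    rintro N z ⟨B, ⟨-, hBU⟩, hzB⟩
    exact hBU hzB
  have w_det : ∀ N z w, z ∈ W N → (∀ i ≤ N, z i = w i) → w ∈ W N := by
    rintro N z w ⟨B, ⟨⟨V, hVopen, rfl⟩, hBU⟩, hzB⟩ hzw
    exact ⟨_, ⟨⟨V, hVopen, rfl⟩, hBU⟩, fun i hi => hzw i hi ▸ hzB i hi⟩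
  have w_cover : ∀ z ∈ U, ∃ N, z ∈ W N := by
    intro z hz
    obtain ⟨I, u, hu, hsub⟩ := isOpen_pi_iff.1 hU z hz
    refine ⟨I.sup id, ?_⟩
    refine ⟨{w | ∀ i ≤ I.sup id, w i ∈ if h : i ∈ I then u i else Set.univ},
      ⟨⟨fun i => if h : i ∈ I then u i else Set.univ, fun i => ?_, rfl⟩, ?_⟩, ?_⟩
    · show IsOpen (if h : i ∈ I then u i else Set.univ)
      by_cases h : i ∈ I
      · rw [dif_pos h]; exact (hu i h).1
      · rw [dif_neg h]; exact isOpen_univ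
    · intro w hw
      refine hsub fun i hi => ?_
      have hi' : i ∈ I := hi
      have := hw i (Finset.le_sup (f := id) hi')
      rwa [dif_pos hi'] at this
    · intro i hi
      by_cases h : i ∈ I
      · rw [dif_pos h]; exact (hu i h).2
      · rw [dif_neg h]; trivial
  -- decompose each W N as a countable union of closed sets
  have decomp : ∀ N, ∃ D : ℕ → Set (∀ n, X n), (∀ m, IsClosed (D m)) ∧ W N = ⋃ m, D m := by
    intro N
    have hgd : IsGδ (W N)ᶜ := PerfectlyNormalSpace.closed_gdelta (w_open N).isClosed_compl
    obtain ⟨T, hTopen, hTc, hTeq⟩ := hgd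
    rcases T.eq_empty_or_nonempty with rfl | hTne
    · refine ⟨fun _ => ∅, fun _ => isClosed_empty, ?_⟩
      have : W N = ∅ := by
        have := hTeq
        rw [Set.sInter_empty] at this
        rw [← compl_compl (W N), this, Set.compl_univ]
      simp [this]
    · obtain ⟨t, ht⟩ := hTc.exists_eq_range hTne
      refine ⟨fun m => (t m)ᶜ, fun m => (hTopen (t m) (ht ▸ Set.mem_range_self m)).isClosed_compl, ?_⟩
      have h1 : (W N)ᶜ = ⋂ m, t m := by rw [hTeq, ht, Set.sInter_range]
      rw [← compl_compl (W N), h1, Set.compl_iInter]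
  choose D hDclosed hDeq using decomp
  -- Urysohn functions
  have ury : ∀ N m, ∃ g : (∀ n, X n) → ℝ, Continuous g ∧ (∀ z, 0 ≤ g z) ∧
      (∀ z ∈ (W N)ᶜ, g z = 0) ∧ (∀ z ∈ D N m, g z = 1) := by
    intro N m
    have hDW : D N m ⊆ W N := (hDeq N) ▸ Set.subset_iUnion (D N) m
    have hdisj : Disjoint ((W N)ᶜ) (D N m) :=
      Set.disjoint_left.2 fun z hz hzD => hz (hDW hzD)
    obtain ⟨g, hg0, hg1, hgIcc⟩ :=
      exists_continuous_zero_one_of_isClosed (w_open N).isClosed_compl (hDclosed N m) hdisj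
    exact ⟨g, g.continuous, fun z => (hgIcc z).1, fun z hz => hg0 hz, fun z hz => hg1 hz⟩
  choose gg hggc hggnn hgg0 hgg1 using ury
  -- retractions
  set r : ℕ → (∀ n, X n) → (∀ n, X n) := fun N z i => if i ≤ N then z i else a i with hr
  have hrc : ∀ N, Continuous (r N) := by
    intro N
    refine continuous_pi fun i => ?_
    by_cases h : i ≤ N
    · simpa [hr, h] using (continuous_apply i)
    · simpa [hr, h] using (continuous_const : Continuous fun _ : (∀ n, X n) => a i)
  have hragree : ∀ N z, ∀ i ≤ N, (r N z) i = z i := by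
    intro N z i hi; simp [hr, hi]
  refine ⟨fun l => fun z => gg (Nat.unpair l).1 (Nat.unpair l).2 (r (Nat.unpair l).1 z),
    fun l => ⟨?_, ⟨(Nat.unpair l).1, ?_⟩, ?_, ?_⟩, ?_⟩
  · exact (hggc _ _).comp (hrc _)
  · intro z w hzw
    have : r (Nat.unpair l).1 z = r (Nat.unpair l).1 w := by
      funext i
      by_cases h : i ≤ (Nat.unpair l).1 <;> simp [hr, h, hzw i]
    show gg (Nat.unpair l).1 (Nat.unpair l).2 (r (Nat.unpair l).1 z)
      = gg (Nat.unpair l).1 (Nat.unpair l).2 (r (Nat.unpair l).1 w)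
    rw [this]
  · intro z; exact hggnn _ _ _
  · intro z hz
    set N := (Nat.unpair l).1
    have hz' : 0 < gg N (Nat.unpair l).2 (r N z) := hz
    have hrW : r N z ∈ W N := by
      by_contra hcon
      have h0 := hgg0 N (Nat.unpair l).2 _ hcon
      rw [h0] at hz'
      exact lt_irrefl 0 hz'
    exact w_sub N (w_det N (r N z) z hrW (hragree N z))
  · intro z hz
    obtain ⟨N, hzW⟩ := w_cover z hz
    have hrW : r N z ∈ W N :=
      w_det N z (r N z) hzW (fun i hi => (hragree N z i hi).symm)
    rw [hDeq N] at hrW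
    obtain ⟨m, hm⟩ := Set.mem_iUnion.1 hrW
    refine ⟨Nat.pair N m, ?_⟩
    have h1 := hgg1 N m _ hm
    simp only [Nat.unpair_pair]
    rw [h1]
    exact zero_lt_one

theorem cov {X : ℕ → Type*} [∀ n, TopologicalSpace (X n)] [∀ n, T35Space (X n)]
    {S : Set (∀ n, X n)}
    (hPX : PerfectlyNormalSpace (∀ n, X n) ∨ LindelofSpace S)
    {F U : Set S} (hF : IsClosed F) (hU : IsOpen U) (hFU : F ⊆ U) :
    ∃ h : ℕ → S → ℝ, (∀ l, Continuous (h l) ∧ FinDetOn S (h l) ∧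
      (∀ x, 0 ≤ h l x) ∧ (∀ x, 0 < h l x → x ∈ U)) ∧
      ∀ x ∈ F, ∃ l, 0 < h l x := by
  classical
  obtain ⟨U', hU'o, hU'eq⟩ := isOpen_induced_iff.1 hU
  rcases hPX with hPN | hLin
  · haveI := hPN
    obtain ⟨q, hq, hqcov⟩ := pn_cover hU'o
    refine ⟨fun l x => q l ↑x, fun l => ⟨?_, ?_, ?_, ?_⟩, ?_⟩
    · exact (hq l).1.comp continuous_subtype_val
    · exact ⟨(hq l).2.1.choose, fun x y hxy => (hq l).2.1.choose_spec ↑x ↑y hxy⟩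
    · exact fun x => (hq l).2.2.1 ↑x
    · intro x hx
      have : (↑x : ∀ n, X n) ∈ U' := (hq l).2.2.2 ↑x hx
      rw [← hU'eq]; exact this
    · intro x hx
      exact hqcov ↑x (by rw [← Set.mem_preimage, hU'eq]; exact hFU hx)
  · haveI := hLin
    rcases F.eq_empty_or_nonempty with rfl | hFne
    · exact ⟨fun _ _ => 0, fun l => ⟨continuous_const, ⟨0, fun _ _ _ => rfl⟩,
        fun _ => le_refl 0, fun x hx => absurd hx (lt_irrefl 0)⟩,
        fun x hx => absurd hx (Set.notMem_empty x)⟩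
    have hmem : ∀ i : F, ((i : S) : ∀ n, X n) ∈ U' := by
      intro i
      rw [← Set.mem_preimage, hU'eq]
      exact hFU i.2
    choose hh N hhc hhdet hhnn hhcoz hhpos using fun i : F => cozero_at_point hU'o (hmem i)
    have hVo : ∀ i : F, IsOpen (Subtype.val ⁻¹' {z | 0 < hh i z} : Set S) :=
      fun i => (isOpen_lt continuous_const (hhc i)).preimage continuous_subtype_val
    have hcovF : F ⊆ ⋃ i : F, Subtype.val ⁻¹' {z | 0 < hh i z} := by
      intro x hx
      exact Set.mem_iUnion.2 ⟨⟨x, hx⟩, hhpos ⟨x, hx⟩⟩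
    obtain ⟨r, hrc, hrcov⟩ := hF.isLindelof.elim_countable_subcover _ hVo hcovF
    have hrne : r.Nonempty := by
      obtain ⟨x, hx⟩ := hFne
      obtain ⟨i, hi⟩ := Set.mem_iUnion₂.1 (hrcov hx)
      exact ⟨i, hi.1⟩
    obtain ⟨e, he⟩ := hrc.exists_eq_range hrne
    refine ⟨fun l x => hh (e l) ↑x, fun l => ⟨?_, ?_, ?_, ?_⟩, ?_⟩
    · exact (hhc (e l)).comp continuous_subtype_val
    · exact ⟨N (e l), fun x y hxy => hhdet (e l) ↑x ↑y hxy⟩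
    · exact fun x => hhnn (e l) ↑x
    · intro x hx
      have : (↑x : ∀ n, X n) ∈ U' := hhcoz (e l) ↑x hx
      rw [← hU'eq]; exact this
    · intro x hx
      obtain ⟨i, hir, hxi⟩ := Set.mem_iUnion₂.1 (hrcov hx)
      rw [he] at hir
      obtain ⟨l, rfl⟩ := hir
      exact ⟨l, hxi⟩

theorem exists_gamma {Y : Type*} [TopologicalSpace Y] [PathConnectedSpace Y] (y : ℕ → Y) :
    ∃ γ : ℝ → Y, Continuous γ ∧ ∀ k : ℕ, γ (k : ℝ) = y k := by
  classical
  have J : ∀ k, Joined (y k) (y (k + 1)) := fun k => PathConnectedSpace.joined _ _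
  set p : ∀ k, Path (y k) (y (k + 1)) := fun k => (J k).somePath with hp
  set γ : ℝ → Y := fun t => (p (⌊t⌋.toNat)).extend (t - (⌊t⌋.toNat : ℝ)) with hγ
  have hgen : ∀ (m j : ℕ), m = j → ∀ s : ℝ,
      (p m).extend (s - (m : ℝ)) = (p j).extend (s - (j : ℝ)) := by
    rintro m j rfl s; rfl
  have keyIcc : ∀ (j : ℕ) (s : ℝ), s ∈ Set.Icc (j : ℝ) (j + 1) →
      γ s = (p j).extend (s - j) := by
    intro j s hs
    rcases lt_or_eq_of_le hs.2 with h | h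
    · have hfl : ⌊s⌋ = (j : ℤ) := by
        rw [Int.floor_eq_iff]
        constructor
        · exact_mod_cast hs.1
        · exact_mod_cast h
      have htn : ⌊s⌋.toNat = j := by rw [hfl]; exact Int.toNat_natCast j
      exact hgen _ _ htn s
    · have hs1 : s = (j : ℝ) + 1 := h
      have hfl : ⌊s⌋ = (j : ℤ) + 1 := by
        rw [hs1]
        rw [show ((j : ℝ) + 1) = (((j : ℤ) + 1 : ℤ) : ℝ) by push_cast; ring]
        exact Int.floor_intCast _
      have htn : ⌊s⌋.toNat = j + 1 := by
        rw [hfl]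
        rw [show ((j : ℤ) + 1) = ((j + 1 : ℕ) : ℤ) by push_cast; ring]
        exact Int.toNat_natCast (j + 1)
      have lhs : γ s = y (j + 1) := by
        have h2 : γ s = (p (j+1)).extend (s - ((j+1:ℕ) : ℝ)) := hgen _ _ htn s
        rw [h2, hs1]
        push_cast
        rw [show (j : ℝ) + 1 - (j + 1) = 0 by ring]
        exact Path.extend_zero _
      have rhs : (p j).extend (s - j) = y (j + 1) := by
        rw [hs1, show (j : ℝ) + 1 - j = 1 by ring]
        exact Path.extend_one _
      rw [lhs, rhs]
  have keyIic : ∀ s : ℝ, s ≤ 0 → γ s = (p 0).extend s := by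
    intro s hs
    have hfl : ⌊s⌋.toNat = 0 := Int.toNat_of_nonpos (Int.floor_nonpos hs)
    have h2 : γ s = (p 0).extend (s - ((0:ℕ) : ℝ)) := hgen _ _ hfl s
    rw [h2]
    norm_num
  have hval : ∀ k : ℕ, γ (k : ℝ) = y k := by
    intro k
    rw [keyIcc k (k : ℝ) ⟨le_rfl, by linarith⟩, sub_self]
    exact Path.extend_zero _
  refine ⟨γ, ?_, hval⟩
  rw [continuous_iff_continuousAt]
  intro t
  rcases lt_or_ge t 0 with ht | ht
  · have hev : γ =ᶠ[𝓝 t] fun s => (p 0).extend s := by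
      filter_upwards [isOpen_Iio.mem_nhds ht] with s hs
      exact keyIic s (le_of_lt hs)
    exact ((p 0).continuous_extend.continuousAt).congr hev.symm
  · set k : ℕ := ⌊t⌋.toNat with hk
    have hfl : (⌊t⌋.toNat : ℤ) = ⌊t⌋ := Int.toNat_of_nonneg (Int.floor_nonneg.2 ht)
    have hk1 : (k : ℝ) ≤ t := by
      rw [hk]
      have := Int.floor_le t
      rw [← hfl] at this
      exact_mod_cast this
    have hk2 : t < (k : ℝ) + 1 := by
      rw [hk]
      have := Int.lt_floor_add_one t
      rw [← hfl] at this
      exact_mod_cast this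
    rcases lt_or_eq_of_le hk1 with hlt | heq
    · have hev : γ =ᶠ[𝓝 t] fun s => (p k).extend (s - k) := by
        filter_upwards [(isOpen_Ioo (a := (k:ℝ)) (b := (k:ℝ)+1)).mem_nhds ⟨hlt, hk2⟩] with s hs
        exact keyIcc k s ⟨le_of_lt hs.1, le_of_lt hs.2⟩
      exact (((p k).continuous_extend.comp (continuous_id.sub continuous_const)).continuousAt).congr hev.symm
    · -- t = k, integer point
      have htk : t = (k : ℝ) := heq.symm
      rw [ContinuousAt, ← nhdsLE_sup_nhdsGE t, tendsto_sup]
      constructor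
      · -- from the left
        rcases k.eq_zero_or_pos with hk0 | hkpos
        · have ht0 : t = 0 := by rw [htk, hk0]; norm_num
          have hmem : Set.Iic t ∈ 𝓝[≤] t := self_mem_nhdsWithin
          have hcont : Tendsto (fun s => (p 0).extend s) (𝓝[≤] t) (𝓝 (γ t)) := by
            have : γ t = (p 0).extend t := keyIic t (le_of_eq ht0)
            rw [this]
            exact ((p 0).continuous_extend.continuousAt).continuousWithinAt
          refine hcont.congr' ?_
          filter_upwards [hmem] with s hs
          exact (keyIic s (le_trans hs (le_of_eq ht0))).symm
        · obtain ⟨j, hkj⟩ : ∃ j, k = j + 1 := ⟨k - 1, (Nat.succ_pred_eq_of_pos hkpos).symm⟩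
          have htj : t = (j : ℝ) + 1 := by rw [htk, hkj]; push_cast; ring
          have hmem : Set.Icc ((j : ℝ)) ((j : ℝ) + 1) ∈ 𝓝[≤] t := by
            apply Icc_mem_nhdsLE_of_mem
            rw [htj]
            constructor
            · linarith
            · linarith
          have hcont : Tendsto (fun s => (p j).extend (s - j)) (𝓝[≤] t) (𝓝 (γ t)) := by
            have h1 : γ t = (p j).extend (t - j) := by
              apply keyIcc
              rw [htj]
              constructor <;> [linarith; linarith]
            rw [h1]
            exact (((p j).continuous_extend.comp
              (continuous_id.sub continuous_const)).continuousAt).continuousWithinAt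
          refine hcont.congr' ?_
          filter_upwards [hmem] with s hs
          exact (keyIcc j s hs).symm
      · -- from the right
        have hmem : Set.Icc ((k : ℝ)) ((k : ℝ) + 1) ∈ 𝓝[≥] t := by
          apply Icc_mem_nhdsGE_of_mem
          rw [htk]
          exact ⟨le_rfl, by linarith⟩
        have hcont : Tendsto (fun s => (p k).extend (s - k)) (𝓝[≥] t) (𝓝 (γ t)) := by
          have h1 : γ t = (p k).extend (t - k) := by
            apply keyIcc
            rw [htk]
            exact ⟨le_rfl, by linarith⟩
          rw [h1]
          exact (((p k).continuous_extend.comp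
            (continuous_id.sub continuous_const)).continuousAt).continuousWithinAt
        refine hcont.congr' ?_
        filter_upwards [hmem] with s hs
        exact (keyIcc k s hs).symm


/-- Let `P = ∏ₙ Xₙ` be a product of Tychonoff spaces, `X ⊆ P` a subspace such
that `P` is perfectly normal or `X` is Lindelöf, and `Y` a path-connected space.  Then every
first Lebesgue class function `f : X → Y` with countable discrete image is the pointwise
limit of a sequence of continuous finitely determined functions `X → Y`. -/
theorem stmt10 {X : ℕ → Type*} [∀ n, TopologicalSpace (X n)] [∀ n, T35Space (X n)]
    (S : Set (∀ n, X n))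
    (hPX : PerfectlyNormalSpace (∀ n, X n) ∨ LindelofSpace S)
    {Y : Type*} [TopologicalSpace Y] [PathConnectedSpace Y]
    (f : S → Y) (hf : LebesgueOne f)
    (hcnt : (Set.range f).Countable) (hdisc : DiscreteTopology (Set.range f)) :
    ∃ g : ℕ → S → Y, (∀ n, Continuous (g n) ∧ FinDetOn S (g n)) ∧
      ∀ x : S, Tendsto (fun n => g n x) atTop (𝓝 (f x)) := by
  classical
  by_cases hSne : Nonempty S
  swap
  · have hempty : IsEmpty ↥S := not_nonempty_iff.1 hSne
    have hopen : ∀ s : Set ↥S, IsOpen s := fun s => by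
      have : s = ∅ := Set.eq_empty_of_isEmpty s
      rw [this]; exact isOpen_empty
    exact ⟨fun _ => f, fun n => ⟨continuous_def.2 fun V _ => hopen _,
      ⟨0, fun x => isEmptyElim x⟩⟩, fun x => isEmptyElim x⟩
  obtain ⟨x₀⟩ := hSne
  have hrne : (Set.range f).Nonempty := ⟨f x₀, Set.mem_range_self x₀⟩
  obtain ⟨y, hy⟩ := hcnt.exists_eq_range hrne
  have hex : ∀ x : S, ∃ k, f x = y k := by
    intro x
    have hm : f x ∈ Set.range y := by rw [← hy]; exact Set.mem_range_self x
    obtain ⟨k, hk⟩ := hm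
    exact ⟨k, hk.symm⟩
  have hyk : ∀ k, y k ∈ Set.range f := fun k => by rw [hy]; exact Set.mem_range_self k
  -- the level sets and their complements are F_sigma
  have hsing : ∀ k : ℕ, IsFsigma (f ⁻¹' {y k}) := by
    intro k
    have hopen : IsOpen ({⟨y k, hyk k⟩} : Set (Set.range f)) := isOpen_discrete _
    obtain ⟨V, hVo, hVeq⟩ := isOpen_induced_iff.1 hopen
    have heq : f ⁻¹' V = f ⁻¹' {y k} := by
      ext x
      simp only [Set.mem_preimage, Set.mem_singleton_iff]
      constructor
      · intro hxV
        have h1 : (⟨f x, Set.mem_range_self x⟩ : Set.range f) ∈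
            ({⟨y k, hyk k⟩} : Set (Set.range f)) := by
          rw [← hVeq]; exact hxV
        exact Subtype.ext_iff.1 h1
      · intro hxy
        have h1 : (⟨y k, hyk k⟩ : Set.range f) ∈ Subtype.val ⁻¹' V := by
          rw [hVeq]; rfl
        rw [hxy]; exact h1
    rw [← heq]; exact hf V hVo
  have hcompl : ∀ k : ℕ, IsFsigma ((f ⁻¹' {y k})ᶜ) := by
    intro k
    have hopen : IsOpen ({z : Set.range f | z ≠ ⟨y k, hyk k⟩}) := isOpen_discrete _
    obtain ⟨V, hVo, hVeq⟩ := isOpen_induced_iff.1 hopen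
    have heq : f ⁻¹' V = (f ⁻¹' {y k})ᶜ := by
      ext x
      simp only [Set.mem_preimage, Set.mem_compl_iff, Set.mem_singleton_iff]
      constructor
      · intro hxV hxy
        have h1 : (⟨f x, Set.mem_range_self x⟩ : Set.range f) ∈
            {z : Set.range f | z ≠ ⟨y k, hyk k⟩} := by
          rw [← hVeq]; exact hxV
        exact h1 (Subtype.ext hxy)
      · intro hxy
        have h1 : (⟨f x, Set.mem_range_self x⟩ : Set.range f) ∈
            {z : Set.range f | z ≠ ⟨y k, hyk k⟩} :=
          fun hcon => hxy (Subtype.ext_iff.1 hcon)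
        rw [← hVeq] at h1; exact h1
    rw [← heq]; exact hf V hVo
  set A : ℕ → Set ↥S := fun k => f ⁻¹' {y k} ∩ ⋂ j ∈ Finset.range k, (f ⁻¹' {y j})ᶜ with hA
  have hIfs : ∀ s : Finset ℕ, IsFsigma (⋂ j ∈ s, (f ⁻¹' {y j})ᶜ) := by
    intro s
    induction s using Finset.induction_on with
    | empty => simpa using isFsigma_univ
    | @insert a s ha ih =>
      rw [Finset.set_biInter_insert]
      exact (hcompl a).inter' ih
  have hAfs : ∀ k, IsFsigma (A k) := fun k => (hsing k).inter' (hIfs _)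
  have hmemA : ∀ x : ↥S, x ∈ A (Nat.find (hex x)) := by
    intro x
    constructor
    · exact Nat.find_spec (hex x)
    · simp only [Set.mem_iInter]
      intro j hj
      simp only [Set.mem_compl_iff, Set.mem_preimage, Set.mem_singleton_iff]
      exact Nat.find_min (hex x) (Finset.mem_range.1 hj)
  have hAdisj : ∀ (x : ↥S) j k, j ≠ k → x ∈ A j → x ∈ A k → False := by
    have haux : ∀ (x : ↥S) j k, j < k → x ∈ A j → x ∈ A k → False := by
      intro x j k h hxj hxk
      have h2 := Set.mem_iInter₂.1 hxk.2 j (Finset.mem_range.2 h)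
      exact h2 hxj.1
    intro x j k hjk hxj hxk
    rcases Nat.lt_or_ge j k with h | h
    · exact haux x j k h hxj hxk
    · exact haux x k j (lt_of_le_of_ne h (Ne.symm hjk)) hxk hxj
  choose F hFc hFeq using hAfs
  set F' : ℕ → ℕ → Set ↥S := fun k m => ⋃ j ∈ Finset.range (m + 1), F k j with hF'
  have hF'c : ∀ k m, IsClosed (F' k m) := fun k m =>
    (Finset.range (m + 1)).finite_toSet.isClosed_biUnion fun j _ => hFc k j
  have hF'sub : ∀ k m, F' k m ⊆ A k := by
    intro k m x hx
    obtain ⟨j, _, hxj⟩ := Set.mem_iUnion₂.1 hx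
    rw [hFeq k]
    exact Set.mem_iUnion.2 ⟨j, hxj⟩
  have hF'mem : ∀ (x : ↥S) k, x ∈ A k → ∃ m₀, ∀ m, m₀ ≤ m → x ∈ F' k m := by
    intro x k hx
    rw [hFeq k] at hx
    obtain ⟨j, hj⟩ := Set.mem_iUnion.1 hx
    exact ⟨j, fun m hm =>
      Set.mem_iUnion₂.2 ⟨j, Finset.mem_range.2 (Nat.lt_succ_of_le hm), hj⟩⟩
  set G : ℕ → ℕ → Set ↥S := fun k m => ⋃ j ∈ (Finset.range (m + 1)).erase k, F' j m with hG
  have hGc : ∀ k m, IsClosed (G k m) := fun k m =>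
    ((Finset.range (m + 1)).erase k).finite_toSet.isClosed_biUnion fun j _ => hF'c j m
  have hF'G : ∀ k m, F' k m ⊆ (G k m)ᶜ := by
    intro k m x hx hxG
    obtain ⟨j, hj, hxj⟩ := Set.mem_iUnion₂.1 hxG
    have hjk := (Finset.mem_erase.1 hj).1
    exact hAdisj x j k hjk (hF'sub j m hxj) (hF'sub k m hx)
  have hGmem : ∀ (x : ↥S) k m j, x ∈ F' k m → j ≠ k → k ≤ m → x ∈ G j m := by
    intro x k m j hx hjk hkm
    exact Set.mem_iUnion₂.2 ⟨k, Finset.mem_erase.2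
      ⟨fun hc => hjk hc.symm, Finset.mem_range.2 (Nat.lt_succ_of_le hkm)⟩, hx⟩
  have hcovmain := fun k m => cov hPX (hF'c k m) (hGc k m).isOpen_compl (hF'G k m)
  choose h hmain hcover using hcovmain
  have hhc : ∀ k m l, Continuous (h k m l) := fun k m l => (hmain k m l).1
  choose Nb hNb using fun k m l => (hmain k m l).2.1
  have hhnn : ∀ k m l x, 0 ≤ h k m l x := fun k m l => (hmain k m l).2.2.1
  have hhcoz : ∀ k m l (x : ↥S), 0 < h k m l x → x ∈ (G k m)ᶜ :=
    fun k m l => (hmain k m l).2.2.2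
  -- stage functions
  set a : ℕ → ℕ → ℕ → ↥S → ℝ :=
    fun n k m x => ∑ l ∈ Finset.range (n + 1), h k m l x with ha
  set v : ℕ → ℕ → ℕ → ↥S → ℝ := fun n k m x => min 1 ((n : ℝ) * a n k m x) with hv
  set ω : ℕ → ℕ → ↥S → ℝ :=
    fun n k x => ∑ m ∈ Finset.range (n + 1), (m : ℝ) * v n k m x with hω
  set den : ℕ → ↥S → ℝ :=
    fun n x => 1 + ∑ k ∈ Finset.range (n + 1), (ω n k x) ^ n with hden
  set num : ℕ → ↥S → ℝ :=
    fun n x => ∑ k ∈ Finset.range (n + 1), (k : ℝ) * (ω n k x) ^ n with hnum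
  set φ : ℕ → ↥S → ℝ := fun n x => num n x / den n x with hφ
  have hann : ∀ n k m x, 0 ≤ a n k m x :=
    fun n k m x => Finset.sum_nonneg fun l _ => hhnn k m l x
  have hvnn : ∀ n k m x, 0 ≤ v n k m x := fun n k m x =>
    le_min zero_le_one (mul_nonneg (Nat.cast_nonneg n) (hann n k m x))
  have hv1 : ∀ n k m x, v n k m x ≤ 1 := fun n k m x => min_le_left _ _
  have hωnn : ∀ n k x, 0 ≤ ω n k x := fun n k x =>
    Finset.sum_nonneg fun m _ => mul_nonneg (Nat.cast_nonneg m) (hvnn n k m x)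
  have hdenpos : ∀ n x, 0 < den n x := by
    intro n x
    have h1 : 0 ≤ ∑ k ∈ Finset.range (n + 1), (ω n k x) ^ n :=
      Finset.sum_nonneg fun k _ => pow_nonneg (hωnn n k x) n
    rw [hden]
    dsimp only
    linarith
  obtain ⟨γ, hγc, hγval⟩ := exists_gamma y
  refine ⟨fun n x => γ (φ n x), fun n => ⟨?_, ?_⟩, ?_⟩
  · -- continuity
    have hac : ∀ k m, Continuous (a n k m) := fun k m =>
      continuous_finset_sum _ fun l _ => hhc k m l
    have hvc : ∀ k m, Continuous (v n k m) := fun k m =>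
      continuous_const.min (continuous_const.mul (hac k m))
    have hωc : ∀ k, Continuous (ω n k) := fun k =>
      continuous_finset_sum _ fun m _ => continuous_const.mul (hvc k m)
    have hnumc : Continuous (num n) :=
      continuous_finset_sum _ fun k _ => continuous_const.mul ((hωc k).pow n)
    have hdenc : Continuous (den n) :=
      continuous_const.add (continuous_finset_sum _ fun k _ => (hωc k).pow n)
    exact hγc.comp (hnumc.div hdenc fun x => ne_of_gt (hdenpos n x))
  · -- finite determination
    set NN : ℕ := Finset.sup (Finset.range (n + 1)) fun k =>
      Finset.sup (Finset.range (n + 1)) fun m =>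
        Finset.sup (Finset.range (n + 1)) fun l => Nb k m l with hNN
    refine ⟨NN, fun x z hxz => ?_⟩
    have hh : ∀ k ∈ Finset.range (n + 1), ∀ m ∈ Finset.range (n + 1),
        ∀ l ∈ Finset.range (n + 1), h k m l x = h k m l z := by
      intro k hk m hm l hl
      apply hNb k m l x z
      intro i hi
      apply hxz
      calc i ≤ Nb k m l := hi
        _ ≤ Finset.sup (Finset.range (n + 1)) fun l => Nb k m l :=
            Finset.le_sup (f := fun l => Nb k m l) hl
        _ ≤ Finset.sup (Finset.range (n + 1)) fun m =>
              Finset.sup (Finset.range (n + 1)) fun l => Nb k m l :=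
            Finset.le_sup (f := fun m => Finset.sup (Finset.range (n + 1))
              fun l => Nb k m l) hm
        _ ≤ NN := Finset.le_sup (f := fun k => Finset.sup (Finset.range (n + 1))
              fun m => Finset.sup (Finset.range (n + 1)) fun l => Nb k m l) hk
    have hωeq : ∀ k ∈ Finset.range (n + 1), ω n k x = ω n k z := by
      intro k hk
      apply Finset.sum_congr rfl
      intro m hm
      have haeq : a n k m x = a n k m z :=
        Finset.sum_congr rfl fun l hl => hh k hk m hm l hl
      rw [hv]
      dsimp only
      rw [haeq]
    have hnumeq : num n x = num n z :=
      Finset.sum_congr rfl fun k hk => by rw [hωeq k hk]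
    have hdeneq : den n x = den n z := by
      rw [hden]
      dsimp only
      rw [Finset.sum_congr rfl fun k hk => by rw [hωeq k hk]]
    show γ (φ n x) = γ (φ n z)
    rw [hφ]
    dsimp only
    rw [hnumeq, hdeneq]
  · -- pointwise convergence
    intro x
    set Kx : ℕ := Nat.find (hex x) with hKx
    have hfx : f x = y Kx := Nat.find_spec (hex x)
    have hxA : x ∈ A Kx := hmemA x
    obtain ⟨m₀, hm₀⟩ := hF'mem x Kx hxA
    set M : ℕ := max m₀ Kx with hM
    have hzero : ∀ j, j ≠ Kx → ∀ m, M ≤ m → ∀ l, h j m l x = 0 := by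
      intro j hj m hMm l
      have hxF : x ∈ F' Kx m := hm₀ m (le_trans (le_max_left _ _) hMm)
      have hxG : x ∈ G j m := hGmem x Kx m j hxF hj (le_trans (le_max_right _ _) hMm)
      by_contra hne
      exact (hhcoz j m l x (lt_of_le_of_ne (hhnn j m l x) (Ne.symm hne))) hxG
    have hvz : ∀ n j, j ≠ Kx → ∀ m, M ≤ m → v n j m x = 0 := by
      intro n j hj m hMm
      have ha0 : a n j m x = 0 :=
        Finset.sum_eq_zero fun l _ => hzero j hj m hMm l
      rw [hv]
      dsimp only
      rw [ha0, mul_zero]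
      exact min_eq_right zero_le_one
    set B : ℝ := (M : ℝ) * M + 1 with hB
    have hB1 : (1 : ℝ) ≤ B := by
      have : (0 : ℝ) ≤ (M : ℝ) * M := mul_nonneg (Nat.cast_nonneg M) (Nat.cast_nonneg M)
      rw [hB]; linarith
    have hωb : ∀ n j, j ≠ Kx → ω n j x ≤ B := by
      intro n j hj
      have hterm : ∀ m ∈ Finset.range (n + 1),
          (m : ℝ) * v n j m x ≤ if m < M then (M : ℝ) else 0 := by
        intro m _
        by_cases hmM : m < M
        · rw [if_pos hmM]
          calc (m : ℝ) * v n j m x ≤ (M : ℝ) * 1 :=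
              mul_le_mul (Nat.cast_le.2 (le_of_lt hmM)) (hv1 n j m x)
                (hvnn n j m x) (Nat.cast_nonneg M)
            _ = (M : ℝ) := mul_one _
        · rw [if_neg hmM, hvz n j hj m (not_lt.1 hmM), mul_zero]
      calc ω n j x ≤ ∑ m ∈ Finset.range (n + 1), (if m < M then (M : ℝ) else 0) :=
          Finset.sum_le_sum hterm
        _ = ((Finset.range (n + 1)).filter (fun m => m < M)).card • (M : ℝ) := by
            rw [Finset.sum_ite, Finset.sum_const, Finset.sum_const_zero, add_zero]
        _ = (((Finset.range (n + 1)).filter (fun m => m < M)).card : ℝ) * M := by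
            rw [nsmul_eq_mul]
        _ ≤ (M : ℝ) * M := by
            apply mul_le_mul_of_nonneg_right _ (Nat.cast_nonneg M)
            have hsub : (Finset.range (n + 1)).filter (fun m => m < M) ⊆ Finset.range M :=
              fun m hm => Finset.mem_range.2 (Finset.mem_filter.1 hm).2
            have := Finset.card_le_card hsub
            rw [Finset.card_range] at this
            exact_mod_cast this
        _ ≤ B := by rw [hB]; linarith
    have hωK : ∀ T : ℝ, ∃ N₁ : ℕ, ∀ n, N₁ ≤ n → T ≤ ω n Kx x := by
      intro T
      set mb : ℕ := max m₀ ⌈T⌉₊ with hmb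
      have hxF : x ∈ F' Kx mb := hm₀ mb (le_max_left _ _)
      obtain ⟨l₀, hl₀⟩ := hcover Kx mb x hxF
      obtain ⟨n₁, hn₁⟩ := exists_nat_ge (1 / h Kx mb l₀ x)
      refine ⟨max (max mb l₀) n₁, fun n hn => ?_⟩
      have hmbn : mb ≤ n := le_trans (le_trans (le_max_left _ _) (le_max_left _ _)) hn
      have hl₀n : l₀ ≤ n := le_trans (le_trans (le_max_right _ _) (le_max_left _ _)) hn
      have hn₁n : n₁ ≤ n := le_trans (le_max_right _ _) hn
      have h1 : h Kx mb l₀ x ≤ a n Kx mb x := by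
        rw [ha]
        dsimp only
        exact Finset.single_le_sum (fun l _ => hhnn Kx mb l x)
          (Finset.mem_range.2 (Nat.lt_succ_of_le hl₀n))
      have h2 : (1 : ℝ) ≤ (n : ℝ) * a n Kx mb x := by
        have hd : (1 : ℝ) ≤ (n₁ : ℝ) * h Kx mb l₀ x := by
          have := (div_le_iff₀ hl₀).1 hn₁
          linarith
        calc (1 : ℝ) ≤ (n₁ : ℝ) * h Kx mb l₀ x := hd
          _ ≤ (n : ℝ) * a n Kx mb x :=
            mul_le_mul (Nat.cast_le.2 hn₁n) h1 (le_of_lt hl₀) (Nat.cast_nonneg n)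
      have hveq : v n Kx mb x = 1 := by
        rw [hv]
        dsimp only
        exact min_eq_left h2
      calc T ≤ (⌈T⌉₊ : ℝ) := Nat.le_ceil T
        _ ≤ (mb : ℝ) := Nat.cast_le.2 (le_max_right _ _)
        _ = (mb : ℝ) * v n Kx mb x := by rw [hveq, mul_one]
        _ ≤ ω n Kx x := Finset.single_le_sum
            (fun m _ => mul_nonneg (Nat.cast_nonneg m) (hvnn n Kx m x))
            (Finset.mem_range.2 (Nat.lt_succ_of_le hmbn))
    set r : ℝ := B / (B + 1) with hr
    have hr0 : 0 ≤ r := div_nonneg (by linarith) (by linarith)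
    have hr1 : r < 1 := (div_lt_one (by linarith)).2 (by linarith)
    obtain ⟨N₁, hN₁⟩ := hωK (B + 1)
    have hbound : ∀ n, max N₁ Kx ≤ n →
        |φ n x - Kx| ≤ ((n : ℝ) ^ 2 + n + Kx) * r ^ n := by
      intro n hn
      have hKn : Kx ≤ n := le_trans (le_max_right _ _) hn
      have hωKn : B + 1 ≤ ω n Kx x := hN₁ n (le_trans (le_max_left _ _) hn)
      have hdp := hdenpos n x
      have hden_ge : (B + 1) ^ n ≤ den n x := by
        have hs1 : (B + 1) ^ n ≤ (ω n Kx x) ^ n := pow_le_pow_left₀ (by linarith) hωKn n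
        have hs2 : (ω n Kx x) ^ n ≤ ∑ k ∈ Finset.range (n + 1), (ω n k x) ^ n :=
          Finset.single_le_sum (fun k _ => pow_nonneg (hωnn n k x) n)
            (Finset.mem_range.2 (Nat.lt_succ_of_le hKn))
        have hs3 : ∑ k ∈ Finset.range (n + 1), (ω n k x) ^ n ≤ den n x := by
          rw [hden]; dsimp only; linarith
        linarith
      have hdiff : φ n x - Kx = (num n x - Kx * den n x) / den n x := by
        rw [eq_div_iff (ne_of_gt hdp), hφ]
        dsimp only
        rw [sub_mul, div_mul_cancel₀ _ (ne_of_gt hdp)]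
      have hexp : num n x - Kx * den n x
          = (∑ k ∈ Finset.range (n + 1), ((k : ℝ) - Kx) * (ω n k x) ^ n) - Kx := by
        have hsp : ∑ k ∈ Finset.range (n + 1), ((k : ℝ) - Kx) * (ω n k x) ^ n
            = num n x - Kx * ∑ k ∈ Finset.range (n + 1), (ω n k x) ^ n := by
          rw [hnum]
          dsimp only
          rw [Finset.mul_sum, ← Finset.sum_sub_distrib]
          apply Finset.sum_congr rfl
          intro k _
          ring
        rw [hsp, hden]
        dsimp only
        ring
      have hterm : ∀ k ∈ Finset.range (n + 1),
          |((k : ℝ) - Kx) * (ω n k x) ^ n| ≤ (n : ℝ) * B ^ n := by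
        intro k hk
        rw [abs_mul, abs_of_nonneg (pow_nonneg (hωnn n k x) n)]
        by_cases hkK : k = Kx
        · rw [hkK, sub_self, abs_zero, zero_mul]
          positivity
        · have hkn : (k : ℝ) ≤ n := Nat.cast_le.2 (Nat.lt_succ_iff.1 (Finset.mem_range.1 hk))
          have hKn' : (Kx : ℝ) ≤ n := Nat.cast_le.2 hKn
          have habs : |(k : ℝ) - Kx| ≤ (n : ℝ) := by
            rw [abs_sub_le_iff]
            constructor
            · have : (0 : ℝ) ≤ (Kx : ℝ) := Nat.cast_nonneg Kx
              linarith
            · have : (0 : ℝ) ≤ (k : ℝ) := Nat.cast_nonneg k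
              linarith
          exact mul_le_mul habs (pow_le_pow_left₀ (hωnn n k x) (hωb n k hkK) n)
            (pow_nonneg (hωnn n k x) n) (Nat.cast_nonneg n)
      have hnumb : |num n x - Kx * den n x| ≤ ((n : ℝ) ^ 2 + n + Kx) * B ^ n := by
        rw [hexp]
        have ht1 : |(∑ k ∈ Finset.range (n + 1), ((k : ℝ) - Kx) * (ω n k x) ^ n) - Kx|
            ≤ |∑ k ∈ Finset.range (n + 1), ((k : ℝ) - Kx) * (ω n k x) ^ n| + |(Kx : ℝ)| :=
          abs_sub _ _
        have ht2 : |∑ k ∈ Finset.range (n + 1), ((k : ℝ) - Kx) * (ω n k x) ^ n|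
            ≤ ∑ k ∈ Finset.range (n + 1), |((k : ℝ) - Kx) * (ω n k x) ^ n| :=
          Finset.abs_sum_le_sum_abs _ _
        have ht3 : ∑ k ∈ Finset.range (n + 1), |((k : ℝ) - Kx) * (ω n k x) ^ n|
            ≤ (n + 1 : ℕ) • ((n : ℝ) * B ^ n) := by
          have := Finset.sum_le_card_nsmul (Finset.range (n + 1)) _ _ hterm
          rwa [Finset.card_range] at this
        have ht4 : ((n + 1 : ℕ) : ℝ) * ((n : ℝ) * B ^ n) = ((n : ℝ) ^ 2 + n) * B ^ n := by
          push_cast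
          ring
        have ht5 : |(Kx : ℝ)| ≤ (Kx : ℝ) * B ^ n := by
          rw [abs_of_nonneg (Nat.cast_nonneg Kx)]
          exact le_mul_of_one_le_right (Nat.cast_nonneg Kx) (one_le_pow₀ hB1)
        have ht3' : ∑ k ∈ Finset.range (n + 1), |((k : ℝ) - Kx) * (ω n k x) ^ n|
            ≤ ((n : ℝ) ^ 2 + n) * B ^ n := by
          rw [← ht4]
          rw [nsmul_eq_mul] at ht3
          exact ht3
        calc |(∑ k ∈ Finset.range (n + 1), ((k : ℝ) - Kx) * (ω n k x) ^ n) - Kx|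
            ≤ |∑ k ∈ Finset.range (n + 1), ((k : ℝ) - Kx) * (ω n k x) ^ n| + |(Kx : ℝ)| := ht1
          _ ≤ ((n : ℝ) ^ 2 + n) * B ^ n + (Kx : ℝ) * B ^ n :=
              add_le_add (le_trans ht2 ht3') ht5
          _ = ((n : ℝ) ^ 2 + n + Kx) * B ^ n := by ring
      rw [hdiff, abs_div, abs_of_pos hdp]
      have hBpow : (0 : ℝ) < (B + 1) ^ n := pow_pos (by linarith) n
      calc |num n x - Kx * den n x| / den n x
          ≤ (((n : ℝ) ^ 2 + n + Kx) * B ^ n) / (B + 1) ^ n :=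
            div_le_div₀ (by positivity) hnumb hBpow hden_ge
        _ = ((n : ℝ) ^ 2 + n + Kx) * r ^ n := by
            rw [hr, div_pow, mul_div_assoc]
    -- the bound tends to zero
    have hrnorm : ‖r‖ < 1 := by rw [Real.norm_eq_abs, abs_of_nonneg hr0]; exact hr1
    have h2 : Tendsto (fun n : ℕ => (n : ℝ) ^ 2 * r ^ n) atTop (𝓝 0) :=
      (summable_pow_mul_geometric_of_norm_lt_one 2 hrnorm).tendsto_atTop_zero
    have h1 : Tendsto (fun n : ℕ => (n : ℝ) ^ 1 * r ^ n) atTop (𝓝 0) :=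
      (summable_pow_mul_geometric_of_norm_lt_one 1 hrnorm).tendsto_atTop_zero
    have h0 : Tendsto (fun n : ℕ => (Kx : ℝ) * r ^ n) atTop (𝓝 0) := by
      have := (tendsto_pow_atTop_nhds_zero_of_lt_one hr0 hr1).const_mul (Kx : ℝ)
      simpa using this
    have htend0 : Tendsto (fun n : ℕ => ((n : ℝ) ^ 2 + n + Kx) * r ^ n) atTop (𝓝 0) := by
      have hsum := (h2.add h1).add h0
      rw [add_zero, add_zero] at hsum
      refine hsum.congr fun n => ?_
      ring
    have hφtend : Tendsto (fun n => φ n x) atTop (𝓝 (Kx : ℝ)) := by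
      have hsq : Tendsto (fun n => φ n x - Kx) atTop (𝓝 0) := by
        apply squeeze_zero_norm' _ htend0
        filter_upwards [eventually_ge_atTop (max N₁ Kx)] with n hn
        rw [Real.norm_eq_abs]
        exact hbound n hn
      have := hsq.add_const (Kx : ℝ)
      simpa using this
    have hcomp : Tendsto (fun n => γ (φ n x)) atTop (𝓝 (γ (Kx : ℝ))) :=
      (hγc.continuousAt).tendsto.comp hφtend
    rw [hγval Kx] at hcomp
    rw [hfx]
    exact hcomp
end

section
/- Let X be a topological space and (Y,d_Y) a metric space. Let f : X → Y be a map, (f_n) a sequence of maps f_n : X → Y converging stably to f on X, and for every n ∈ ℕ let (f_{n,k})_{k=1}^∞ be a sequence of maps f_{n,k} : X → Y converging uniformly on X to f_n. Then f is the pointwise limit of a sequence of maps each of which belongs to the set {f_{n,k} : n,k ∈ ℕ}. -/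
open Filter Topology

/-- If a sequence `(fₙ)` of maps into a metric space converges stably to `f`
(i.e. for each `x` there is `k` with `fₙ x = f x` for all `n ≥ k`) and, for every `n`, a
sequence `(f_{n,k})_k` converges uniformly to `fₙ`, then `f` is the pointwise limit of a
sequence of maps from the set `{f_{n,k} : n, k ∈ ℕ}`. -/
theorem stmt11 {X Y : Type*} [TopologicalSpace X] [MetricSpace Y]
    (f : X → Y) (fs : ℕ → X → Y) (F : ℕ → ℕ → X → Y)
    (hstab : ∀ x : X, ∃ k : ℕ, ∀ n ≥ k, fs n x = f x)
    (hunif : ∀ n, TendstoUniformly (F n) (fs n) atTop) :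
    ∃ g : ℕ → X → Y, (∀ j, ∃ n k, g j = F n k) ∧
      ∀ x : X, Tendsto (fun j => g j x) atTop (𝓝 (f x)) := by
  have hk : ∀ n : ℕ, ∃ k, ∀ x, dist (fs n x) (F n k x) < 1 / (n + 1) := by
    intro n
    have := (Metric.tendstoUniformly_iff.mp (hunif n)) (1 / (n + 1)) (by positivity)
    exact this.exists
  choose k hkd using hk
  refine ⟨fun n => F n (k n), fun j => ⟨j, k j, rfl⟩, fun x => ?_⟩
  rw [Metric.tendsto_atTop]
  intro ε hε
  obtain ⟨m, hm⟩ := hstab x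
  obtain ⟨m', hm'⟩ := exists_nat_one_div_lt hε
  refine ⟨max m m', fun n hn => ?_⟩
  have h1 : fs n x = f x := hm n (le_trans (le_max_left _ _) hn)
  have h2 : dist (fs n x) (F n (k n) x) < 1 / (n + 1) := hkd n x
  rw [← h1, dist_comm]
  calc dist (fs n x) (F n (k n) x) < 1 / (n + 1) := h2
    _ ≤ 1 / (m' + 1) := by
        apply div_le_div_of_nonneg_left (by norm_num) (by positivity)
        have : m' ≤ n := le_trans (le_max_right _ _) hn
        exact_mod_cast Nat.add_le_add_right this 1
    _ < ε := hm'
end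

section
/- Let P = ∏_{n=1}^∞ X_n be a product of a sequence of topological spaces which is pseudocompact, and let (Y,d_Y) be a path-connected metric space. Then every function f : P → Y of the first Baire class whose image f(P) is countable and discrete (as a subspace of Y) is the pointwise limit of a sequence of functions from CF(P,Y). -/
open Filter Topology

/-- A map on a countable product depends on finitely many coordinates. -/
def FinDet {X : ℕ → Type*} {Y : Type*} (f : (∀ n, X n) → Y) : Prop :=
  ∃ N : ℕ, ∀ x y : ∀ n, X n, (∀ i ≤ N, x i = y i) → f x = f y

/-- A topological space is pseudocompact: every continuous real-valued function is bounded. -/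
def Pseudocompact (X : Type*) [TopologicalSpace X] : Prop :=
  ∀ f : X → ℝ, Continuous f → ∃ M : ℝ, ∀ x, |f x| ≤ M

/-- A map is of the first Baire class: a pointwise limit of continuous maps. -/
def BaireOne {X Y : Type*} [TopologicalSpace X] [TopologicalSpace Y] (f : X → Y) : Prop :=
  ∃ g : ℕ → X → Y, (∀ n, Continuous (g n)) ∧
    ∀ x, Tendsto (fun n => g n x) atTop (𝓝 (f x))

set_option maxHeartbeats 1000000 in
/-- On a pseudocompact space, every countable cover by cozero sets (here presented by the
functions `u n`, the sets being `{z | 0 < u n z}`) has a finite subcover. -/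
theorem stmt12_aux_ccc {Z : Type*} [TopologicalSpace Z] (hZ : Pseudocompact Z)
    (u : ℕ → Z → ℝ) (hu : ∀ n, Continuous (u n)) (hcov : ∀ z, ∃ n, 0 < u n z) :
    ∃ K, ∀ z, ∃ n ≤ K, 0 < u n z := by
  by_contra hC
  push_neg at hC
  set v : ℕ → Z → ℝ := fun n z => (2:ℝ)⁻¹ ^ n * max 0 (min 1 (u n z)) with hv
  have hv_cont : ∀ n, Continuous (v n) := fun n =>
    continuous_const.mul (continuous_const.max (continuous_const.min (hu n)))
  have hv_nonneg : ∀ n z, 0 ≤ v n z := fun n z =>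
    mul_nonneg (by positivity) (le_max_left _ _)
  have hv_le : ∀ n z, v n z ≤ (2:ℝ)⁻¹ ^ n := by
    intro n z
    have h1 : max 0 (min 1 (u n z)) ≤ 1 := max_le (by norm_num) (min_le_left _ _)
    calc v n z ≤ (2:ℝ)⁻¹ ^ n * 1 := by
          exact mul_le_mul_of_nonneg_left h1 (by positivity)
      _ = (2:ℝ)⁻¹ ^ n := mul_one _
  have hsumg : Summable fun n : ℕ => ((2:ℝ)⁻¹) ^ n :=
    summable_geometric_of_lt_one (by norm_num) (by norm_num)
  set φ : Z → ℝ := fun z => ∑' n, v n z with hφ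
  have hφc : Continuous φ := by
    apply continuous_tsum hv_cont hsumg
    intro n z
    rw [Real.norm_eq_abs, abs_of_nonneg (hv_nonneg n z)]
    exact hv_le n z
  have hsummz : ∀ z, Summable fun n => v n z := fun z =>
    Summable.of_nonneg_of_le (fun n => hv_nonneg n z) (fun n => hv_le n z) hsumg
  have hφpos : ∀ z, 0 < φ z := by
    intro z
    obtain ⟨n, hn⟩ := hcov z
    refine Summable.tsum_pos (hsummz z) (fun i => hv_nonneg i z) n ?_
    have : 0 < min 1 (u n z) := lt_min (by norm_num) hn
    have : 0 < max 0 (min 1 (u n z)) := lt_max_of_lt_right this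
    positivity
  obtain ⟨M, hM⟩ := hZ (fun z => (φ z)⁻¹) (hφc.inv₀ (fun z => (hφpos z).ne'))
  obtain ⟨K, hK⟩ := pow_unbounded_of_one_lt M (by norm_num : (1:ℝ) < 2)
  obtain ⟨z, hz⟩ := hC K
  have hzero : ∀ i < K + 1, v i z = 0 := by
    intro i hi
    have : u i z ≤ 0 := hz i (Nat.lt_succ_iff.mp hi)
    have h1 : min 1 (u i z) ≤ 0 := le_trans (min_le_right _ _) this
    have h2 : max 0 (min 1 (u i z)) = 0 := max_eq_left h1
    simp [hv, h2]
  have htail : φ z ≤ (2:ℝ)⁻¹ ^ K := by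
    have hsplit := Summable.sum_add_tsum_nat_add (f := fun n => v n z) (K + 1) (hsummz z)
    have h0 : (∑ i ∈ Finset.range (K+1), v i z) = 0 :=
      Finset.sum_eq_zero fun i hi => hzero i (Finset.mem_range.mp hi)
    have hsum1 : Summable fun n : ℕ => v (n + (K+1)) z :=
      (summable_nat_add_iff (K+1)).mpr (hsummz z)
    have hsum2 : Summable fun n : ℕ => (2:ℝ)⁻¹ ^ (n + (K+1)) :=
      (summable_nat_add_iff (K+1)).mpr hsumg
    have hle : (∑' n : ℕ, v (n + (K+1)) z) ≤ ∑' n : ℕ, (2:ℝ)⁻¹ ^ (n + (K+1)) :=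
      Summable.tsum_le_tsum (fun n => hv_le _ z) hsum1 hsum2
    have hgeo : (∑' n : ℕ, (2:ℝ)⁻¹ ^ (n + (K+1))) = (2:ℝ)⁻¹ ^ K := by
      have : ∀ n : ℕ, (2:ℝ)⁻¹ ^ (n + (K+1)) = (2:ℝ)⁻¹ ^ n * (2:ℝ)⁻¹ ^ (K+1) := by
        intro n; rw [pow_add]
      rw [tsum_congr this, tsum_mul_right, tsum_geometric_of_lt_one (by norm_num) (by norm_num)]
      rw [pow_succ]
      norm_num
      ring
    have : φ z = (∑ i ∈ Finset.range (K+1), v i z) + ∑' n : ℕ, v (n + (K+1)) z := hsplit.symm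
    rw [this, h0, zero_add]
    calc (∑' n : ℕ, v (n + (K+1)) z) ≤ _ := hle
      _ = _ := hgeo
  have h2K : (2:ℝ) ^ K ≤ (φ z)⁻¹ := by
    have h1 : (0:ℝ) < (2:ℝ)⁻¹ ^ K := by positivity
    have := one_div_le_one_div_of_le (hφpos z) htail
    rw [one_div, one_div] at this
    calc (2:ℝ) ^ K = ((2:ℝ)⁻¹ ^ K)⁻¹ := by rw [← inv_pow]; simp
      _ ≤ (φ z)⁻¹ := this
  have := hM z
  have habs : (φ z)⁻¹ ≤ M := le_trans (le_abs_self _) this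
  linarith

section Spl
variable {X : ℕ → Type*} [∀ n, TopologicalSpace (X n)]

/-- Splicing: keep the first `N + 1` coordinates of `x`, use the fixed point `a` afterwards. -/
def stmt12Spl (a : ∀ n, X n) (N : ℕ) (x : ∀ n, X n) : ∀ n, X n :=
  fun i => if i ≤ N then x i else a i

theorem continuous_stmt12Spl (a : ∀ n, X n) (N : ℕ) : Continuous (stmt12Spl a N) := by
  apply continuous_pi
  intro i
  by_cases hi : i ≤ N
  · simp only [stmt12Spl, if_pos hi]; exact continuous_apply i
  · simp only [stmt12Spl, if_neg hi]; exact continuous_const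

theorem stmt12Spl_stmt12Spl (a : ∀ n, X n) {M N : ℕ} (h : M ≤ N) (x : ∀ n, X n) :
    stmt12Spl a M (stmt12Spl a N x) = stmt12Spl a M x := by
  funext i
  simp only [stmt12Spl]
  by_cases hi : i ≤ M
  · rw [if_pos hi, if_pos hi, if_pos (le_trans hi h)]
  · rw [if_neg hi, if_neg hi]

theorem tendsto_stmt12Spl (a x : ∀ n, X n) :
    Tendsto (fun N => stmt12Spl a N x) atTop (𝓝 x) := by
  rw [tendsto_pi_nhds]
  intro i
  have hconst : Tendsto (fun _ : ℕ => x i) atTop (𝓝 (x i)) := tendsto_const_nhds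
  apply hconst.congr'
  filter_upwards [eventually_ge_atTop i] with N hN
  simp [stmt12Spl, hN]

/-- The key lemma: on a pseudocompact countable product, every continuous map `h` into a
metric space is uniformly approximated by the finitely determined maps `h ∘ stmt12Spl a N`. -/
theorem stmt12_aux_lemL (hP : Pseudocompact (∀ n, X n)) (a : ∀ n, X n)
    {Y : Type*} [MetricSpace Y] (h : (∀ n, X n) → Y) (hc : Continuous h)
    {ε : ℝ} (hε : 0 < ε) : ∃ N, ∀ x, dist (h x) (h (stmt12Spl a N x)) ≤ ε := by
  by_contra hC
  push_neg at hC
  set δ := ε / 8 with hδ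
  have hδ0 : 0 < δ := by positivity
  have hset : ∀ x : ∀ n, X n, ∃ m, ∀ M ≥ m, dist (h (stmt12Spl a M x)) (h x) < δ := by
    intro x
    have h1 : Tendsto (fun N => h (stmt12Spl a N x)) atTop (𝓝 (h x)) :=
      (hc.tendsto x).comp (tendsto_stmt12Spl a x)
    exact Metric.tendsto_atTop.mp h1 δ hδ0
  have hwin : ∀ A : ℕ, ∃ B, A < B ∧
      ∀ x, ∃ M, A < M ∧ M ≤ B ∧ dist (h x) (h (stmt12Spl a M x)) < δ := by
    intro A
    obtain ⟨K, hK⟩ := stmt12_aux_ccc hP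
      (fun m x => δ - dist (h x) (h (stmt12Spl a (A + 1 + m) x)))
      (fun m => continuous_const.sub
        ((hc.dist (hc.comp (continuous_stmt12Spl a (A + 1 + m))))))
      (by
        intro x
        obtain ⟨m₀, hm₀⟩ := hset x
        refine ⟨m₀, ?_⟩
        have hge : A + 1 + m₀ ≥ m₀ := by omega
        have := hm₀ _ hge
        rw [sub_pos, dist_comm]
        exact this)
    refine ⟨A + 1 + K, by omega, ?_⟩
    intro x
    obtain ⟨m, hm, hpos⟩ := hK x
    exact ⟨A + 1 + m, by omega, by omega, by rw [sub_pos] at hpos; exact hpos⟩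
  choose nxt hnxt1 hnxt2 using hwin
  obtain ⟨L, hL0, hLs⟩ : ∃ L : ℕ → ℕ, L 0 = 0 ∧ ∀ k, L (k + 1) = nxt (L k) :=
    ⟨fun k => Nat.rec 0 (fun _ ih => nxt ih) k, rfl, fun _ => rfl⟩
  have hLlt : ∀ k, L k < L (k + 1) := fun k => (hLs k) ▸ hnxt1 (L k)
  have hLsm : StrictMono L := strictMono_nat_of_lt_succ hLlt
  have hwin' : ∀ k (x : ∀ n, X n), ∃ M, L k < M ∧ M ≤ L (k + 1) ∧
      dist (h x) (h (stmt12Spl a M x)) < δ := by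
    intro k x
    rw [hLs k]
    exact hnxt2 (L k) x
  set pr : ℕ → Finset (ℕ × ℕ) :=
    fun k => (Finset.Ioc (L k) (L (k+1))) ×ˢ (Finset.Ioc (L k) (L (k+1))) with hpr
  set bad : ℕ → (∀ n, X n) → ℝ := fun k x =>
    ∑ p ∈ pr k, max (dist (h (stmt12Spl a p.1 x)) (h (stmt12Spl a p.2 x)) - 5 * δ) 0 with hbad
  have hbad_cont : ∀ k, Continuous (bad k) := by
    intro k
    apply continuous_finset_sum
    intro p _
    exact (((hc.comp (continuous_stmt12Spl a p.1)).dist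
      (hc.comp (continuous_stmt12Spl a p.2))).sub continuous_const).max continuous_const
  have hbad_nonneg : ∀ k x p, p ∈ pr k →
      (0:ℝ) ≤ max (dist (h (stmt12Spl a p.1 x)) (h (stmt12Spl a p.2 x)) - 5 * δ) 0 :=
    fun _ _ _ _ => le_max_right _ _
  obtain ⟨K, hKc⟩ := stmt12_aux_ccc hP (fun k x => δ - bad k x)
    (fun k => continuous_const.sub (hbad_cont k))
    (by
      intro x
      obtain ⟨m, hm⟩ := hset x
      refine ⟨m, ?_⟩
      show 0 < δ - bad m x
      have hz : bad m x = 0 := by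
        apply Finset.sum_eq_zero
        intro p hp
        obtain ⟨hp1, hp2⟩ := Finset.mem_product.mp hp
        have h1 : m ≤ p.1 := le_trans (hLsm.le_apply) (Finset.mem_Ioc.mp hp1).1.le
        have h2 : m ≤ p.2 := le_trans (hLsm.le_apply) (Finset.mem_Ioc.mp hp2).1.le
        have d1 := hm p.1 h1
        have d2 := hm p.2 h2
        have hlt : dist (h (stmt12Spl a p.1 x)) (h (stmt12Spl a p.2 x)) < 2 * δ := by
          calc dist (h (stmt12Spl a p.1 x)) (h (stmt12Spl a p.2 x))
              ≤ dist (h (stmt12Spl a p.1 x)) (h x) + dist (h x) (h (stmt12Spl a p.2 x)) :=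
                dist_triangle _ _ _
            _ < 2 * δ := by rw [dist_comm (h x)]; linarith
        apply max_eq_right
        nlinarith
      rw [hz]
      linarith)
  set N := L (K + 1) + 1 with hN
  obtain ⟨x, hx⟩ := hC N
  obtain ⟨k, hkK, hkpos⟩ := hKc x
  obtain ⟨M, hM1, hM2, hM3⟩ := hwin' k x
  obtain ⟨M', hM'1, hM'2, hM'3⟩ := hwin' k (stmt12Spl a N x)
  have hM'N : M' ≤ N := by
    have : L (k + 1) ≤ L (K + 1) := hLsm.monotone (by omega)
    omega
  rw [stmt12Spl_stmt12Spl a hM'N x] at hM'3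
  have hpair : (M, M') ∈ pr k := by
    rw [hpr]
    exact Finset.mem_product.mpr ⟨Finset.mem_Ioc.mpr ⟨hM1, hM2⟩, Finset.mem_Ioc.mpr ⟨hM'1, hM'2⟩⟩
  have hbig : 6 * δ ≤ dist (h (stmt12Spl a M x)) (h (stmt12Spl a M' x)) := by
    have ht : dist (h x) (h (stmt12Spl a N x)) ≤
        dist (h x) (h (stmt12Spl a M x)) + dist (h (stmt12Spl a M x)) (h (stmt12Spl a M' x))
          + dist (h (stmt12Spl a M' x)) (h (stmt12Spl a N x)) := dist_triangle4 _ _ _ _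
    have h8 : 8 * δ < dist (h x) (h (stmt12Spl a N x)) := by
      rw [hδ] at *
      calc (8:ℝ) * (ε / 8) = ε := by ring
        _ < _ := hx
    rw [dist_comm (h (stmt12Spl a M' x))] at ht
    linarith
  have hterm : δ ≤ max (dist (h (stmt12Spl a M x)) (h (stmt12Spl a M' x)) - 5 * δ) 0 := by
    have hd : δ ≤ dist (h (stmt12Spl a M x)) (h (stmt12Spl a M' x)) - 5 * δ := by linarith
    exact le_trans hd (le_max_left _ _)
  have hsum : δ ≤ bad k x := by
    calc δ ≤ max (dist (h (stmt12Spl a M x)) (h (stmt12Spl a M' x)) - 5 * δ) 0 := hterm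
      _ ≤ bad k x := Finset.single_le_sum (hbad_nonneg k x) hpair
  have : (0:ℝ) < δ - bad k x := hkpos
  linarith

end Spl

/-- Let `P = ∏ₙ Xₙ` be a pseudocompact product of topological spaces and
`(Y, d)` a path-connected metric space.  Then every Baire one function `f : P → Y` with
countable discrete image is the pointwise limit of a sequence of continuous finitely
determined functions `P → Y`. -/
theorem stmt12 {X : ℕ → Type*} [∀ n, TopologicalSpace (X n)]
    (hP : Pseudocompact (∀ n, X n))
    {Y : Type*} [MetricSpace Y] [PathConnectedSpace Y]
    (f : (∀ n, X n) → Y) (hf : BaireOne f)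
    (hcnt : (Set.range f).Countable) (hdisc : DiscreteTopology (Set.range f)) :
    ∃ g : ℕ → (∀ n, X n) → Y, (∀ n, Continuous (g n) ∧ FinDet (g n)) ∧
      ∀ x, Tendsto (fun n => g n x) atTop (𝓝 (f x)) := by
  rcases isEmpty_or_nonempty (∀ n, X n) with hE | hNE
  · refine ⟨fun _ => f, fun n => ⟨?_, ⟨0, fun x => (hE.false x).elim⟩⟩,
      fun x => (hE.false x).elim⟩
    exact continuous_iff_continuousAt.mpr fun x => (hE.false x).elim
  · obtain ⟨a⟩ := hNE
    obtain ⟨u, huc, hut⟩ := hf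
    have hN : ∀ n : ℕ, ∃ N, ∀ x, dist (u n x) (u n (stmt12Spl a N x)) ≤ 1 / (n + 1) := by
      intro n
      exact stmt12_aux_lemL hP a (u n) (huc n) (by positivity)
    choose N hNspec using hN
    refine ⟨fun n x => u n (stmt12Spl a (N n) x), fun n => ⟨?_, ?_⟩, ?_⟩
    · exact (huc n).comp (continuous_stmt12Spl a (N n))
    · refine ⟨N n, fun x y hxy => ?_⟩
      have heq : stmt12Spl a (N n) x = stmt12Spl a (N n) y := by
        funext i
        simp only [stmt12Spl]
        by_cases hi : i ≤ N n
        · rw [if_pos hi, if_pos hi, hxy i hi]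
        · rw [if_neg hi, if_neg hi]
      show u n (stmt12Spl a (N n) x) = u n (stmt12Spl a (N n) y)
      rw [heq]
    · intro x
      show Tendsto (fun n => u n (stmt12Spl a (N n) x)) atTop (𝓝 (f x))
      rw [tendsto_iff_dist_tendsto_zero]
      apply squeeze_zero (g := fun n : ℕ => 1 / ((n : ℝ) + 1) + dist (u n x) (f x))
        (fun n => dist_nonneg)
      · intro n
        calc dist (u n (stmt12Spl a (N n) x)) (f x)
            ≤ dist (u n (stmt12Spl a (N n) x)) (u n x) + dist (u n x) (f x) :=
              dist_triangle _ _ _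
          _ ≤ 1 / ((n:ℝ) + 1) + dist (u n x) (f x) := by
              have := hNspec n x
              rw [dist_comm] at this
              linarith
      · have h1 : Tendsto (fun n : ℕ => 1 / ((n:ℝ) + 1)) atTop (𝓝 0) :=
          tendsto_one_div_add_atTop_nhds_zero_nat
        have h2 : Tendsto (fun n => dist (u n x) (f x)) atTop (𝓝 0) :=
          tendsto_iff_dist_tendsto_zero.mp (hut x)
        simpa using h1.add h2
end

section
/- Let P = ∏_{n=1}^∞ X_n be a product of a sequence of topological spaces which is pseudocompact, and let (Y,d_Y) be a path-connected separable metric space which is an R-space. Then every function f : P → Y of the first Baire class is the pointwise limit of a sequence of functions from CF(P,Y). -/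
open Filter Topology

lemma key_lemma {X : ℕ → Type*} [∀ n, TopologicalSpace (X n)]
    (hP : Pseudocompact (∀ n, X n)) {Y : Type*} [MetricSpace Y]
    (h : (∀ n, X n) → Y) (hc : Continuous h) {ε : ℝ} (hε : 0 < ε) :
    ∃ N : ℕ, ∀ x y : ∀ n, X n, (∀ i ≤ N, x i = y i) → dist (h x) (h y) ≤ ε := by
  by_contra hcon
  push_neg at hcon
  choose x y hxy hd using hcon
  set θ : ℝ → ℝ := fun s => max 0 (min 1 ((2/ε) * (s - ε/2))) with hθdef
  have θcont : Continuous θ := by fun_prop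
  have θnn : ∀ s, 0 ≤ θ s := fun s => le_max_left _ _
  have θ0 : ∀ s : ℝ, s ≤ ε/2 → θ s = 0 := by
    intro s hs
    have : (2/ε) * (s - ε/2) ≤ 0 := by
      apply mul_nonpos_of_nonneg_of_nonpos
      · positivity
      · linarith
    simp only [hθdef]
    have : min 1 ((2/ε) * (s - ε/2)) ≤ 0 := le_trans (min_le_right _ _) this
    exact max_eq_left this
  have θ1 : ∀ s : ℝ, ε ≤ s → θ s = 1 := by
    intro s hs
    have h1 : (1:ℝ) ≤ (2/ε) * (s - ε/2) := by
      rw [div_mul_eq_mul_div, le_div_iff₀ hε]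
      ring_nf
      nlinarith
    simp only [hθdef, min_eq_left h1]
    exact max_eq_right zero_le_one
  set μ : ℕ → (∀ n, X n) → (∀ n, X n) := fun n t i => if i ≤ n then t i else y n i with hμdef
  have μcont : ∀ n, Continuous (μ n) := by
    intro n
    apply continuous_pi
    intro i
    by_cases hi : i ≤ n
    · simp only [hμdef, hi, if_true]
      exact continuous_apply i
    · simp only [hμdef, hi, if_false]
      exact continuous_const
  set v : ℕ → (∀ n, X n) → ℝ := fun n t => θ (dist (h t) (h (μ n t))) with hvdef
  have vcont : ∀ n, Continuous (v n) := fun n =>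
    θcont.comp (Continuous.dist hc (hc.comp (μcont n)))
  have vnn : ∀ n t, 0 ≤ v n t := fun n t => θnn _
  -- local finiteness
  have loc : ∀ t : ∀ n, X n, ∃ m : ℕ, ∃ W : Set (∀ n, X n), IsOpen W ∧ t ∈ W ∧
      ∀ t' ∈ W, ∀ n, m ≤ n → v n t' = 0 := by
    intro t
    have hball : h ⁻¹' (Metric.ball (h t) (ε/8)) ∈ 𝓝 t :=
      hc.continuousAt (Metric.ball_mem_nhds _ (by positivity))
    rw [nhds_pi, Filter.mem_pi] at hball
    obtain ⟨I, hIfin, V, hV, hVsub⟩ := hball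
    have := fun i => mem_nhds_iff.mp (hV i)
    choose O hOsub hOopen hOmem using this
    obtain ⟨m, hm⟩ := hIfin.bddAbove
    refine ⟨m, I.pi O, isOpen_set_pi hIfin (fun i _ => hOopen i), fun i hi => hOmem i, ?_⟩
    intro t' ht' n hn
    have hμmem : μ n t' ∈ I.pi O := by
      intro i hi
      have : i ≤ n := le_trans (hm hi) hn
      simp only [hμdef, this, if_true]
      exact ht' i hi
    have h1 : h t' ∈ Metric.ball (h t) (ε/8) :=
      hVsub (fun i hi => hOsub i (ht' i hi))
    have h2 : h (μ n t') ∈ Metric.ball (h t) (ε/8) :=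
      hVsub (fun i hi => hOsub i (hμmem i hi))
    apply θ0
    have := dist_triangle (h t') (h t) (h (μ n t'))
    rw [Metric.mem_ball] at h1 h2
    rw [dist_comm] at h2
    linarith
  have hsum : ∀ t, Summable (fun n : ℕ => (n : ℝ) * v n t) := by
    intro t
    obtain ⟨m, W, hWo, htW, hW⟩ := loc t
    apply summable_of_ne_finset_zero (s := Finset.range m)
    intro n hn
    rw [hW t htW n (by simpa using hn)]
    ring
  set g : (∀ n, X n) → ℝ := fun t => ∑' n : ℕ, (n : ℝ) * v n t with hgdef
  have gcont : Continuous g := by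
    rw [continuous_iff_continuousAt]
    intro t
    obtain ⟨m, W, hWo, htW, hW⟩ := loc t
    have heq : ∀ t' ∈ W, g t' = ∑ n ∈ Finset.range m, (n : ℝ) * v n t' := by
      intro t' ht'
      apply tsum_eq_sum
      intro n hn
      rw [hW t' ht' n (by simpa using hn)]
      ring
    have hfin : ContinuousAt (fun t' => ∑ n ∈ Finset.range m, (n : ℝ) * v n t') t :=
      (continuous_finset_sum _ fun i _ => continuous_const.mul (vcont i)).continuousAt
    apply hfin.congr
    filter_upwards [hWo.mem_nhds htW] with t' ht'
    exact (heq t' ht').symm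
  obtain ⟨M, hM⟩ := hP g gcont
  set n : ℕ := ⌈M⌉₊ + 1 with hndef
  have hμx : μ n (x n) = y n := by
    funext i
    by_cases hi : i ≤ n
    · simp only [hμdef, hi, if_true]
      exact hxy n i hi
    · simp only [hμdef, hi, if_false]
  have hvx : v n (x n) = 1 := by
    rw [hvdef]
    simp only [hμx]
    exact θ1 _ (le_of_lt (hd n))
  have hge : (n : ℝ) ≤ g (x n) := by
    have := Summable.le_tsum (hsum (x n)) n (fun k _ => mul_nonneg (Nat.cast_nonneg k) (vnn k _))
    rwa [hvx, mul_one] at this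
  have hle : g (x n) ≤ M := le_trans (le_abs_self _) (hM (x n))
  have hMn : M < (n : ℝ) := by
    have := Nat.le_ceil M
    push_cast [hndef]
    linarith
  linarith

theorem stmt13' {X : ℕ → Type*} [∀ n, TopologicalSpace (X n)]
    (hP : Pseudocompact (∀ n, X n))
    {Y : Type*} [MetricSpace Y]
    (f : (∀ n, X n) → Y) (hf : BaireOne f) :
    ∃ g : ℕ → (∀ n, X n) → Y, (∀ n, Continuous (g n) ∧ FinDet (g n)) ∧
      ∀ x, Tendsto (fun n => g n x) atTop (𝓝 (f x)) := by
  obtain ⟨h, hhc, hhlim⟩ := hf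
  rcases isEmpty_or_nonempty (∀ n, X n) with hE | hNE
  · exact ⟨fun _ => f,
      fun n => ⟨continuous_iff_continuousAt.mpr (fun x => (hE.false x).elim),
        ⟨0, fun x => (hE.false x).elim⟩⟩,
      fun x => (hE.false x).elim⟩
  · obtain ⟨b⟩ := hNE
    have hpos : ∀ n : ℕ, (0:ℝ) < 1/(n+1) := fun n => by positivity
    choose N hN using fun n => key_lemma hP (h n) (hhc n) (hpos n)
    set σ : ℕ → (∀ n, X n) → (∀ n, X n) := fun n t i => if i ≤ N n then t i else b i with hσdef
    have σcont : ∀ n, Continuous (σ n) := by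
      intro n
      apply continuous_pi
      intro i
      by_cases hi : i ≤ N n
      · simp only [hσdef, hi, if_true]
        exact continuous_apply i
      · simp only [hσdef, hi, if_false]
        exact continuous_const
    refine ⟨fun n => h n ∘ σ n, fun n => ⟨(hhc n).comp (σcont n), ⟨N n, ?_⟩⟩, ?_⟩
    · intro x y hxy
      simp only [Function.comp]
      congr 1
      funext i
      by_cases hi : i ≤ N n
      · simp only [hσdef, hi, if_true]
        exact hxy i hi
      · simp only [hσdef, hi, if_false]
    · intro x
      rw [tendsto_iff_dist_tendsto_zero]
      apply squeeze_zero (fun n => dist_nonneg)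
        (g := fun n : ℕ => 1/((n:ℝ)+1) + dist (h n x) (f x))
      · intro n
        have h1 : dist (h n (σ n x)) (h n x) ≤ 1/((n:ℝ)+1) := by
          apply hN n
          intro i hi
          simp only [hσdef, hi, if_true]
        calc dist ((h n ∘ σ n) x) (f x) ≤ dist (h n (σ n x)) (h n x) + dist (h n x) (f x) :=
              dist_triangle _ _ _
          _ ≤ 1/((n:ℝ)+1) + dist (h n x) (f x) := by linarith
      · have h2 : Tendsto (fun n : ℕ => 1/((n:ℝ)+1)) atTop (𝓝 0) :=
          tendsto_one_div_add_atTop_nhds_zero_nat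
        have h3 := tendsto_iff_dist_tendsto_zero.mp (hhlim x)
        simpa using h2.add h3

/-- Let `P = ∏ₙ Xₙ` be a pseudocompact product of topological spaces and
`(Y, d)` a path-connected separable metric R-space.  Then every Baire one function
`f : P → Y` is the pointwise limit of a sequence of continuous finitely determined
functions `P → Y`. -/
theorem stmt13 {X : ℕ → Type*} [∀ n, TopologicalSpace (X n)]
    (hP : Pseudocompact (∀ n, X n))
    {Y : Type*} [MetricSpace Y] [PathConnectedSpace Y] [TopologicalSpace.SeparableSpace Y]
    (hY : IsRSpace Y)
    (f : (∀ n, X n) → Y) (hf : BaireOne f) :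
    ∃ g : ℕ → (∀ n, X n) → Y, (∀ n, Continuous (g n) ∧ FinDet (g n)) ∧
      ∀ x, Tendsto (fun n => g n x) atTop (𝓝 (f x)) :=
  stmt13' hP f hf
end

section
/- There exists a sequence (A_n)_{n=1}^∞ of pairwise disjoint subsets of the Cantor set C such that: (1) C = ⋃_{n=1}^∞ A_n; and (2) for all n, m ∈ ℕ and every closed set F ⊆ C^m with |F|_m = 𝔠 (the cardinality of the continuum), one has (A_n)^m ∩ F ≠ ∅. -/
open Filter Topology


lemma geom_eq (i : ℕ) : (2:ℝ)/3^(i+1) = (2/3) * (1/3)^i := by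
  rw [pow_succ, one_div, inv_pow]; field_simp

lemma geom_summable : Summable (fun i : ℕ => (2:ℝ)/3^(i+1)) := by
  refine ((summable_geometric_of_lt_one (r := (1/3:ℝ)) (by norm_num) (by norm_num)).mul_left (2/3)).congr ?_
  intro i; rw [geom_eq]

lemma tsum_geom : ∑' i : ℕ, (2:ℝ) / 3 ^ (i+1) = 1 := by
  rw [tsum_congr geom_eq, tsum_mul_left,
    tsum_geometric_of_lt_one (by norm_num) (by norm_num)]
  norm_num

lemma term_le (b : ℕ → Bool) (i : ℕ) :
    (if b i then (2:ℝ) else 0) / 3 ^ (i+1) ≤ 2 / 3^(i+1) := by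
  apply div_le_div_of_nonneg_right ?_ (by positivity)
  split <;> norm_num

noncomputable def cfun (b : ℕ → Bool) : ℝ := ∑' i, (if b i then (2:ℝ) else 0) / 3 ^ (i+1)

lemma cfun_summable (b : ℕ → Bool) :
    Summable (fun i => (if b i then (2:ℝ) else 0) / 3 ^ (i+1)) :=
  Summable.of_nonneg_of_le (fun i => by positivity) (term_le b) geom_summable

lemma cfun_nonneg (b : ℕ → Bool) : 0 ≤ cfun b :=
  tsum_nonneg (fun i => by positivity)

lemma cfun_le_one (b : ℕ → Bool) : cfun b ≤ 1 :=
  tsum_geom ▸ Summable.tsum_le_tsum (term_le b) (cfun_summable b) geom_summable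

lemma cfun_rec (b : ℕ → Bool) :
    cfun b = (if b 0 then (2:ℝ) else 0)/3 + cfun (fun i => b (i+1)) / 3 := by
  rw [cfun, Summable.tsum_eq_zero_add (cfun_summable b)]
  congr 1
  · norm_num
  · rw [cfun, ← tsum_div_const]
    apply tsum_congr
    intro i
    rw [div_div, ← pow_succ]

lemma cfun_mem_pre (n : ℕ) : ∀ b, cfun b ∈ preCantorSet n := by
  induction n with
  | zero => exact fun b => ⟨cfun_nonneg b, cfun_le_one b⟩
  | succ n ih =>
    intro b
    cases h : b 0
    · exact Or.inl ⟨cfun (fun i => b (i+1)), ih _, by rw [cfun_rec b, h]; norm_num⟩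
    · refine Or.inr ⟨cfun (fun i => b (i+1)), ih _, ?_⟩
      rw [cfun_rec b, h]
      norm_num
      ring

lemma cfun_mem (b : ℕ → Bool) : cfun b ∈ cantorSet :=
  Set.mem_iInter.mpr (fun n => cfun_mem_pre n b)

lemma cfun_head {b b' : ℕ → Bool} (h : cfun b = cfun b') : b 0 = b' 0 := by
  have key : ∀ c c' : ℕ → Bool, c 0 = true → c' 0 = false → cfun c ≠ cfun c' := by
    intro c c' hc hc' he
    have h0 := cfun_nonneg (fun i => c (i+1))
    have h1 := cfun_le_one (fun i => c' (i+1))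
    have hb := cfun_rec c
    have hb' := cfun_rec c'
    rw [hc] at hb; rw [hc'] at hb'
    norm_num at hb hb'
    rw [he] at hb
    linarith
  cases hb : b 0 <;> cases hb' : b' 0
  · rfl
  · exact absurd h.symm (key b' b hb' hb)
  · exact absurd h (key b b' hb hb')
  · rfl

lemma cfun_inj : Function.Injective cfun := by
  have key : ∀ n (b b' : ℕ → Bool), cfun b = cfun b' → b n = b' n := by
    intro n
    induction n with
    | zero => exact fun b b' h => cfun_head h
    | succ n ih =>
      intro b b' h
      have h0 := cfun_head h
      have htail : cfun (fun i => b (i+1)) = cfun (fun i => b' (i+1)) := by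
        have hb := cfun_rec b
        have hb' := cfun_rec b'
        rw [h, h0] at hb
        rw [hb] at hb'
        have := sub_eq_zero.mpr hb'.symm
        linarith
      exact ih _ _ htail
  intro b b' h
  funext n
  exact key n b b' h

lemma mk_cantorSet : Cardinal.mk ↥cantorSet = Cardinal.continuum := by
  apply le_antisymm
  · exact (Cardinal.mk_subtype_le _).trans_eq Cardinal.mk_real
  · have hinj : Function.Injective (fun b : ℕ → Bool => (⟨cfun b, cfun_mem b⟩ : ↥cantorSet)) :=
      fun b b' h => cfun_inj (congrArg Subtype.val h)
    calc Cardinal.continuum = Cardinal.mk (ℕ → Bool) := by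
          rw [← Cardinal.power_def, Cardinal.mk_bool, Cardinal.mk_nat, Cardinal.two_power_aleph0]
      _ ≤ _ := Cardinal.mk_le_of_injective hinj



open Cardinal in
lemma mk_closeds_le (X : Type) [TopologicalSpace X] [SecondCountableTopology X] :
    #{F : Set X // IsClosed F} ≤ continuum := by
  obtain ⟨b, hbc, -, hb⟩ := TopologicalSpace.exists_countable_basis X
  have hinj : Function.Injective
      (fun F : {F : Set X // IsClosed F} => {s : b | (s : Set X) ⊆ (F : Set X)ᶜ}) := by
    intro F G h
    simp only [] at h
    have h' : ∀ s : b, ((s : Set X) ⊆ (F : Set X)ᶜ) ↔ ((s : Set X) ⊆ (G : Set X)ᶜ) := by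
      intro s
      constructor
      · intro hs; exact (Set.ext_iff.mp h s).mp hs
      · intro hs; exact (Set.ext_iff.mp h s).mpr hs
    have hF : (F : Set X)ᶜ = ⋃₀ {s : Set X | s ∈ b ∧ s ⊆ (F : Set X)ᶜ} :=
      hb.open_eq_sUnion' F.2.isOpen_compl
    have hG : (G : Set X)ᶜ = ⋃₀ {s : Set X | s ∈ b ∧ s ⊆ (G : Set X)ᶜ} :=
      hb.open_eq_sUnion' G.2.isOpen_compl
    have hsets : {s : Set X | s ∈ b ∧ s ⊆ (F : Set X)ᶜ}
        = {s : Set X | s ∈ b ∧ s ⊆ (G : Set X)ᶜ} := by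
      ext s
      constructor
      · rintro ⟨hs, hsub⟩
        exact ⟨hs, (h' ⟨s, hs⟩).mp hsub⟩
      · rintro ⟨hs, hsub⟩
        exact ⟨hs, (h' ⟨s, hs⟩).mpr hsub⟩
    have : (F : Set X)ᶜ = (G : Set X)ᶜ := by rw [hF, hG, hsets]
    exact Subtype.ext (compl_injective this)
  calc #{F : Set X // IsClosed F} ≤ #(Set b) := mk_le_of_injective hinj
    _ = 2 ^ #b := by rw [mk_set]
    _ ≤ 2 ^ aleph0 := power_le_power_left (by norm_num) (mk_le_aleph0_iff.mpr hbc)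
    _ = continuum := two_power_aleph0


open Cardinal Set
open scoped Classical

noncomputable section Stmt14Aux

abbrev CSpt : Type := ↥cantorSet

instance : Nonempty CSpt := ⟨⟨0, zero_mem_cantorSet⟩⟩

structure MyTask : Type where
  n : ℕ
  m : ℕ
  F : Set (Fin (m + 1) → CSpt)
  closed : IsClosed F
  prop : ∀ B : Set CSpt, F ⊆ {x | ∃ k, x k ∈ B} → #↥B = continuum


lemma mk_task_le : #MyTask ≤ continuum := by
  have hinj : Function.Injective
      (fun t : MyTask => ((t.n, ⟨t.m, ⟨t.F, t.closed⟩⟩) :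
        ℕ × Σ m : ℕ, {F : Set (Fin (m + 1) → CSpt) // IsClosed F})) := by
    rintro ⟨n, m, F, c, p⟩ ⟨n', m', F', c', p'⟩ h
    injection h with hn hs
    injection hs with hm hF
    subst hn; subst hm
    have hF' := eq_of_heq hF
    injection hF' with hF''
    subst hF''
    rfl
  calc #MyTask ≤ #(ℕ × Σ m : ℕ, {F : Set (Fin (m + 1) → CSpt) // IsClosed F}) :=
        mk_le_of_injective hinj
    _ = ℵ₀ * #(Σ m : ℕ, {F : Set (Fin (m + 1) → CSpt) // IsClosed F}) := by
        rw [mk_prod, lift_id, lift_id, mk_nat]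
    _ ≤ ℵ₀ * continuum := by
        apply mul_le_mul_right
        rw [mk_sigma]
        calc (Cardinal.sum fun m => #{F : Set (Fin (m + 1) → CSpt) // IsClosed F})
            ≤ Cardinal.sum fun _ : ℕ => continuum :=
              Cardinal.sum_le_sum _ _ (fun m => mk_closeds_le _)
          _ = ℵ₀ * continuum := by rw [sum_const', mk_nat]
          _ = continuum := mul_eq_right aleph0_le_continuum aleph0_le_continuum aleph0_ne_zero
    _ = continuum := mul_eq_right aleph0_le_continuum aleph0_le_continuum aleph0_ne_zero

def univTask : MyTask where
  n := 0
  m := 0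
  F := Set.univ
  closed := isClosed_univ
  prop := by
    intro B hB
    have : B = Set.univ := by
      ext c
      simp only [Set.mem_univ, iff_true]
      have := hB (Set.mem_univ (fun _ : Fin 1 => c))
      obtain ⟨k, hk⟩ := this
      exact hk
    rw [this, mk_univ]
    exact mk_cantorSet

instance : Nonempty MyTask := ⟨univTask⟩

def pick (t : MyTask) (S : Set CSpt) : Fin (t.m + 1) → CSpt :=
  if h : ∃ x ∈ t.F, ∀ k, x k ∉ S then h.choose else Classical.arbitrary _

lemma pick_spec (t : MyTask) (S : Set CSpt) (hS : #↥S < continuum) :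
    pick t S ∈ t.F ∧ ∀ k, pick t S k ∉ S := by
  have h : ∃ x ∈ t.F, ∀ k, x k ∉ S := by
    by_contra hc
    push_neg at hc
    exact hS.ne (t.prop S (fun x hx => by simpa using hc x hx))
  unfold pick
  rw [dif_pos h]
  exact ⟨h.choose_spec.1, h.choose_spec.2⟩

abbrev Idx : Type := continuum.ord.ToType

def pts (f : Idx → MyTask) : ∀ i : Idx, Fin ((f i).m + 1) → CSpt :=
  (wellFounded_lt (α := Idx)).fix
    (fun i rec => pick (f i) (⋃ j : Iio i, Set.range (rec j j.2)))

lemma pts_eq (f : Idx → MyTask) (i : Idx) :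
    pts f i = pick (f i) (⋃ j : Iio i, Set.range (pts f j)) :=
  WellFounded.fix_eq _ _ _

lemma forb_small (f : Idx → MyTask) (i : Idx) :
    #↥(⋃ j : Iio i, Set.range (pts f j)) < continuum := by
  calc #↥(⋃ j : Iio i, Set.range (pts f j))
      ≤ Cardinal.sum fun j : Iio i => #↥(Set.range (pts f j)) := mk_iUnion_le_sum_mk
    _ ≤ Cardinal.sum fun _ : Iio i => ℵ₀ := Cardinal.sum_le_sum _ _ (fun j => mk_le_aleph0)
    _ = #↥(Iio i) * ℵ₀ := sum_const' _ _
    _ < continuum := mul_lt_of_lt aleph0_le_continuum (mk_Iio_ord_toType i) aleph0_lt_continuum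

lemma pts_spec (f : Idx → MyTask) (i : Idx) :
    pts f i ∈ (f i).F ∧ ∀ k, pts f i k ∉ ⋃ j : Iio i, Set.range (pts f j) := by
  rw [pts_eq]
  exact pick_spec _ _ (forb_small f i)

lemma pts_disjoint (f : Idx → MyTask) {i j : Idx} (hij : i ≠ j) :
    Disjoint (Set.range (pts f i)) (Set.range (pts f j)) := by
  wlog h : j < i generalizing i j
  · exact (this hij.symm ((hij.lt_or_gt).resolve_right h)).symm
  rw [Set.disjoint_right]
  rintro a ⟨k, rfl⟩ ⟨k', hk'⟩
  have := (pts_spec f i).2 k'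
  apply this
  rw [hk']
  exact Set.mem_iUnion.mpr ⟨⟨j, h⟩, ⟨k, rfl⟩⟩


def AAset (f : Idx → MyTask) (n : ℕ) : Set CSpt :=
  (⋃ i : {i : Idx // (f i).n = n}, Set.range (pts f i)) ∪
  {c | n = 0 ∧ ∀ i : Idx, c ∉ Set.range (pts f i)}

lemma range_subset_AAset (f : Idx → MyTask) (i : Idx) :
    Set.range (pts f i) ⊆ AAset f ((f i).n) :=
  fun c hc => Or.inl (Set.mem_iUnion.mpr ⟨⟨i, rfl⟩, hc⟩)

lemma AAset_disjoint (f : Idx → MyTask) : Pairwise (Function.onFun Disjoint (AAset f)) := by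
  intro n n' hnn'
  rw [Function.onFun, Set.disjoint_left]
  rintro c (hc | ⟨h0, hall⟩) hc'
  · obtain ⟨i, hci⟩ := Set.mem_iUnion.mp hc
    rcases hc' with hc' | ⟨-, hall'⟩
    · obtain ⟨i', hci'⟩ := Set.mem_iUnion.mp hc'
      have hne : (i : Idx) ≠ (i' : Idx) := by
        intro he
        exact hnn' (by rw [← i.2, ← i'.2, he])
      exact Set.disjoint_left.mp (pts_disjoint f hne) hci hci'
    · exact hall' i hci
  · rcases hc' with hc' | ⟨h0', -⟩
    · obtain ⟨i', hci'⟩ := Set.mem_iUnion.mp hc'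
      exact hall i' hci'
    · exact hnn' (h0.trans h0'.symm)

lemma AAset_cover (f : Idx → MyTask) : (⋃ n, AAset f n) = Set.univ := by
  ext c
  simp only [Set.mem_iUnion, Set.mem_univ, iff_true]
  by_cases h : ∃ i : Idx, c ∈ Set.range (pts f i)
  · obtain ⟨i, hi⟩ := h
    exact ⟨(f i).n, range_subset_AAset f i hi⟩
  · push_neg at h
    exact ⟨0, Or.inr ⟨rfl, h⟩⟩

lemma main_aux (f : Idx → MyTask) (i : Idx) :
    ∃ x ∈ (f i).F, ∀ k, x k ∈ AAset f ((f i).n) :=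
  ⟨pts f i, (pts_spec f i).1, fun k => range_subset_AAset f i ⟨k, rfl⟩⟩

end Stmt14Aux

/-- There is a sequence `(Aₙ)` of pairwise disjoint subsets of the Cantor set
`C` with `C = ⋃ₙ Aₙ` such that for all `n, m` and every closed `F ⊆ C^m` with `|F|_m = 𝔠`
(every `B ⊆ C` with `F ⊆ r_m(B) = ⋃_k p_{k,m}⁻¹(B)` has cardinality continuum) one has
`(Aₙ)^m ∩ F ≠ ∅`. -/
theorem stmt14 :
    ∃ A : ℕ → Set ↥cantorSet,
      Pairwise (Function.onFun Disjoint A) ∧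
      (⋃ n, A n) = Set.univ ∧
      ∀ (n m : ℕ) (F : Set (Fin (m + 1) → ↥cantorSet)), IsClosed F →
        (∀ B : Set ↥cantorSet, F ⊆ {x | ∃ k, x k ∈ B} →
          Cardinal.mk ↥B = Cardinal.continuum) →
        ∃ x ∈ F, ∀ k, x k ∈ A n := by
  obtain ⟨e⟩ : Nonempty (MyTask ↪ Idx) :=
    (Cardinal.le_def _ _).mp (mk_task_le.trans_eq (Cardinal.mk_ord_toType Cardinal.continuum).symm)
  set f : Idx → MyTask := Function.invFun e with hf
  have hsurj : Function.Surjective f :=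
    fun t => ⟨e t, Function.leftInverse_invFun e.injective t⟩
  refine ⟨AAset f, AAset_disjoint f, AAset_cover f, ?_⟩
  intro n m F hF hprop
  obtain ⟨i, hi⟩ := hsurj ⟨n, m, F, hF, hprop⟩
  have h := main_aux f i
  rw [hi] at h
  exact h
end

section
/- There exists a function g : C → ℝ of the second Baire class (i.e., g is the pointwise limit of a sequence of first Baire class functions on C) such that for every countable set A ⊆ C the restriction g|_{C∖A} is not of the first Baire class on the subspace C∖A (i.e., it is not the pointwise limit of any sequence of continuous real-valued functions on C∖A). -/
open Filter Topology

open Function Classical in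
lemma uncountable_pibool : ¬ (Set.univ : Set (ℕ → Bool)).Countable := by
  rw [Set.countable_univ_iff]
  intro h
  obtain ⟨f, hf⟩ := exists_injective_nat (ℕ → Bool)
  classical
  have hg : Injective (fun S : Set ℕ => fun n => decide (n ∈ S)) := by
    intro S T hST
    ext n
    have := congrFun hST n
    simpa using this
  exact Function.cantor_injective _ (hf.comp hg)

noncomputable def hmap (a : ℕ → Bool) : ℝ := ∑' i, (if a i then (2:ℝ) else 0) / 3 ^ (i + 1)

lemma hmap_term_nonneg (a : ℕ → Bool) (i : ℕ) : 0 ≤ (if a i then (2:ℝ) else 0) / 3 ^ (i + 1) := by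
  positivity

lemma hmap_term_le (a : ℕ → Bool) (i : ℕ) :
    (if a i then (2:ℝ) else 0) / 3 ^ (i + 1) ≤ 2 / 3 ^ (i + 1) := by
  gcongr
  split <;> norm_num

lemma summable_bound : Summable (fun i : ℕ => (2:ℝ) / 3 ^ (i + 1)) := by
  have : (fun i : ℕ => (2:ℝ) / 3 ^ (i + 1)) = fun i => (2/3) * (1/3 : ℝ) ^ i := by
    funext i; rw [pow_succ, one_div, inv_pow]; ring
  rw [this]
  exact (summable_geometric_of_lt_one (by norm_num) (by norm_num)).mul_left _

lemma tsum_bound : ∑' i : ℕ, (2:ℝ) / 3 ^ (i + 1) = 1 := by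
  have : (fun i : ℕ => (2:ℝ) / 3 ^ (i + 1)) = fun i => (2/3) * (1/3 : ℝ) ^ i := by
    funext i; rw [pow_succ, one_div, inv_pow]; ring
  rw [this, tsum_mul_left, tsum_geometric_of_lt_one (by norm_num) (by norm_num)]
  norm_num

lemma hmap_summable (a : ℕ → Bool) :
    Summable (fun i => (if a i then (2:ℝ) else 0) / 3 ^ (i + 1)) :=
  Summable.of_nonneg_of_le (hmap_term_nonneg a) (hmap_term_le a) summable_bound

lemma hmap_nonneg (a : ℕ → Bool) : 0 ≤ hmap a :=
  tsum_nonneg (hmap_term_nonneg a)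

lemma hmap_le_one (a : ℕ → Bool) : hmap a ≤ 1 := by
  rw [← tsum_bound]
  exact Summable.tsum_le_tsum (hmap_term_le a) (hmap_summable a) summable_bound

lemma hmap_shift (a : ℕ → Bool) :
    hmap a = (if a 0 then (2:ℝ) else 0) / 3 + hmap (fun i => a (i + 1)) / 3 := by
  rw [hmap, Summable.tsum_eq_zero_add (hmap_summable a)]
  congr 1
  · norm_num
  · rw [hmap, ← tsum_div_const]
    congr 1
    funext i
    rw [pow_succ]
    ring

lemma hmap_cons (c : Bool) (a : ℕ → Bool) :
    hmap (fun i => if i = 0 then c else a (i - 1)) =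
      (if c then (2:ℝ) else 0) / 3 + hmap a / 3 := by
  rw [hmap_shift]
  simp

lemma hmap_ge (a : ℕ → Bool) (h : a 0 = true) : 2/3 ≤ hmap a := by
  rw [hmap_shift, h]
  have := hmap_nonneg (fun i => a (i + 1))
  simp; linarith

lemma hmap_le (a : ℕ → Bool) (h : a 0 = false) : hmap a ≤ 1/3 := by
  rw [hmap_shift, h]
  have := hmap_le_one (fun i => a (i + 1))
  simp; linarith

lemma hmap_sep : ∀ (n : ℕ) (a b : ℕ → Bool), (∀ i, i < n → a i = b i) →
    a n = true → b n = false → hmap b + (1/3) ^ (n + 1) ≤ hmap a := by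
  intro n
  induction n with
  | zero =>
    intro a b _ ha hb
    have h1 := hmap_ge a ha
    have h2 := hmap_le b hb
    norm_num; linarith
  | succ n ih =>
    intro a b hagree ha hb
    have h0 : a 0 = b 0 := hagree 0 (Nat.succ_pos n)
    have hA := hmap_shift a
    have hB := hmap_shift b
    have ih' := ih (fun i => a (i + 1)) (fun i => b (i + 1))
      (fun i hi => hagree (i + 1) (by omega)) ha hb
    rw [hA, hB, h0]
    have : ((1:ℝ)/3) ^ (n + 1 + 1) = ((1/3)^(n+1)) / 3 := by rw [pow_succ]; ring
    rw [this]
    linarith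

lemma hmap_injective : Function.Injective hmap := by
  intro a b hab
  by_contra hne
  have hex : ∃ n, a n ≠ b n := by
    by_contra h
    push_neg at h
    exact hne (funext h)
  classical
  let n := Nat.find hex
  have hn : a n ≠ b n := Nat.find_spec hex
  have hlt : ∀ i, i < n → a i = b i := fun i hi => by
    have := Nat.find_min hex hi
    simpa using this
  have hpos : (0:ℝ) < (1/3) ^ (n + 1) := by positivity
  cases h1 : a n
  · have h2 : b n = true := by
      cases hbn : b n
      · exact absurd (h1.trans hbn.symm) hn
      · rfl
    have := hmap_sep n b a (fun i hi => (hlt i hi).symm) h2 h1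
    rw [hab] at this; linarith
  · have h2 : b n = false := by
      cases hbn : b n
      · rfl
      · exact absurd (h1.trans hbn.symm) hn
    have := hmap_sep n a b hlt h1 h2
    rw [hab] at this; linarith

lemma hmap_mem_preCantorSet (n : ℕ) (a : ℕ → Bool) : hmap a ∈ preCantorSet n := by
  induction n generalizing a with
  | zero => exact ⟨hmap_nonneg a, hmap_le_one a⟩
  | succ n ih =>
    rw [preCantorSet_succ]
    cases h0 : a 0
    · left
      refine ⟨hmap (fun i => a (i + 1)), ih _, ?_⟩
      rw [hmap_shift a, h0]; simp
    · right
      refine ⟨hmap (fun i => a (i + 1)), ih _, ?_⟩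
      rw [hmap_shift a, h0]; simp; ring

lemma hmap_mem_cantorSet (a : ℕ → Bool) : hmap a ∈ cantorSet :=
  Set.mem_iInter.mpr fun n => hmap_mem_preCantorSet n a

lemma hmap_approx : ∀ (n : ℕ) (x : ℝ), x ∈ preCantorSet n →
    ∃ b : ℕ → Bool, ∀ t : ℕ → Bool,
      |hmap (fun i => if i < n then b i else t (i - n)) - x| ≤ (1/3) ^ n := by
  intro n
  induction n with
  | zero =>
    intro x hx
    refine ⟨fun _ => false, fun t => ?_⟩
    simp only [Nat.not_lt_zero, if_false, pow_zero]
    have h1 := hmap_nonneg (fun i => t (i - 0))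
    have h2 := hmap_le_one (fun i => t (i - 0))
    rw [abs_le]
    constructor <;> [linarith [hx.2]; linarith [hx.1]]
  | succ n ih =>
    rintro x (⟨y, hy, rfl⟩ | ⟨y, hy, rfl⟩)
    · obtain ⟨b, hb⟩ := ih y hy
      refine ⟨fun i => if i = 0 then false else b (i - 1), fun t => ?_⟩
      have hfun : (fun i => if i < n + 1 then (if i = 0 then false else b (i - 1)) else t (i - (n + 1)))
          = fun i => if i = 0 then false else (fun j => if j < n then b j else t (j - n)) (i - 1) := by
        funext i
        cases i with
        | zero => simp
        | succ k => simp only [Nat.succ_sub_one]; by_cases hk : k < n <;> simp [hk, Nat.lt_succ_iff, Nat.succ_sub_succ] <;> omega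
      rw [hfun, hmap_cons _ (fun j => if j < n then b j else t (j - n))]
      simp only [if_neg Bool.false_ne_true, Bool.false_eq_true, if_false]
      have := hb t
      have heq : (0:ℝ)/3 + hmap (fun j => if j < n then b j else t (j - n)) / 3 - y / 3
          = (hmap (fun j => if j < n then b j else t (j - n)) - y) / 3 := by ring
      rw [heq, abs_div]
      rw [pow_succ]
      have : |(3:ℝ)| = 3 := by norm_num
      rw [this]
      calc |hmap (fun j => if j < n then b j else t (j - n)) - y| / 3 ≤ (1/3)^n / 3 := by linarith
        _ = (1/3)^n * (1/3) := by ring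
    · obtain ⟨b, hb⟩ := ih y hy
      refine ⟨fun i => if i = 0 then true else b (i - 1), fun t => ?_⟩
      have hfun : (fun i => if i < n + 1 then (if i = 0 then true else b (i - 1)) else t (i - (n + 1)))
          = fun i => if i = 0 then true else (fun j => if j < n then b j else t (j - n)) (i - 1) := by
        funext i
        cases i with
        | zero => simp
        | succ k => simp only [Nat.succ_sub_one]; by_cases hk : k < n <;> simp [hk, Nat.lt_succ_iff, Nat.succ_sub_succ] <;> omega
      rw [hfun, hmap_cons _ (fun j => if j < n then b j else t (j - n))]
      norm_num
      have := hb t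
      have heq : (2:ℝ)/3 + hmap (fun j => if j < n then b j else t (j - n)) / 3 - (2 + y) / 3
          = (hmap (fun j => if j < n then b j else t (j - n)) - y) / 3 := by ring
      rw [heq, abs_div]
      rw [pow_succ]
      have : |(3:ℝ)| = 3 := by norm_num
      rw [this]
      calc |hmap (fun j => if j < n then b j else t (j - n)) - y| / 3 ≤ (1/3)^n / 3 := by linarith
        _ = (1/3)^n * (1/3) := by ring

lemma hmap_continuous : Continuous hmap := by
  apply continuous_tsum (u := fun i : ℕ => (2:ℝ) / 3 ^ (i + 1))
  · intro i
    have h1 : Continuous fun a : ℕ → Bool => a i := continuous_apply i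
    have h2 : Continuous fun c : Bool => (if c then (2:ℝ) else 0) / 3 ^ (i + 1) :=
      continuous_of_discreteTopology
    exact h2.comp h1
  · exact summable_bound
  · intro n x
    rw [Real.norm_eq_abs, abs_div, abs_of_nonneg (by positivity : (0:ℝ) ≤ 3^(n+1))]
    gcongr
    split <;> norm_num

noncomputable def cg (a : ℕ → Bool) : ↥cantorSet := ⟨hmap a, hmap_mem_cantorSet a⟩

lemma cg_injective : Function.Injective cg := fun a b h =>
  hmap_injective (congrArg Subtype.val h)

lemma cg_continuous : Continuous cg := hmap_continuous.subtype_mk _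

def Kseq (n : ℕ) : Set (ℕ → Bool) := {a | ∀ i, n ≤ i → i % 2 = 0 → a i = false}

lemma Kseq_mono {m n : ℕ} (h : m ≤ n) : Kseq m ⊆ Kseq n :=
  fun a ha i hi he => ha i (le_trans h hi) he

lemma Kseq_nonempty (n : ℕ) : (Kseq n).Nonempty := ⟨fun _ => false, fun _ _ _ => rfl⟩

lemma Kseq_isClosed (n : ℕ) : IsClosed (Kseq n) := by
  have : Kseq n = ⋂ (i : ℕ) (_ : n ≤ i) (_ : i % 2 = 0), {a : ℕ → Bool | a i = false} := by
    ext a; simp [Kseq]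
  rw [this]
  exact isClosed_iInter fun i => isClosed_iInter fun _ => isClosed_iInter fun _ =>
    isClosed_eq (continuous_apply i) continuous_const

lemma Kseq_isCompact (n : ℕ) : IsCompact (Kseq n) := (Kseq_isClosed n).isCompact

noncomputable def Dsub : Set ↥cantorSet := ⋃ n, cg '' Kseq n

lemma image_isClosed (n : ℕ) : IsClosed (cg '' Kseq n) :=
  (((Kseq_isCompact n).image cg_continuous)).isClosed

-- key approximation lemma
lemma key {O : Set ↥cantorSet} (hO : IsOpen O) {x : ↥cantorSet} (hx : x ∈ O) :
    ∃ (n : ℕ) (b : ℕ → Bool), ∀ a : ℕ → Bool, (∀ i, i < n → a i = b i) → cg a ∈ O := by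
  obtain ⟨ε, hε, hball⟩ := Metric.isOpen_iff.mp hO x hx
  obtain ⟨n, hn⟩ := exists_pow_lt_of_lt_one hε (by norm_num : (1:ℝ)/3 < 1)
  have hxn : (x : ℝ) ∈ preCantorSet n := Set.mem_iInter.mp x.2 n
  obtain ⟨b, hb⟩ := hmap_approx n x hxn
  refine ⟨n, b, fun a ha => ?_⟩
  have hform : a = fun i => if i < n then b i else (fun k => a (n + k)) (i - n) := by
    funext i
    by_cases hi : i < n
    · simp [hi, ha i hi]
    · simp only [hi, if_false]
      congr 1
      omega
  apply hball
  rw [Metric.mem_ball, Subtype.dist_eq, Real.dist_eq]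
  show |hmap a - (x:ℝ)| < ε
  calc |hmap a - (x:ℝ)| ≤ (1/3)^n := by rw [hform]; exact hb (fun k => a (n + k))
    _ < ε := hn

def mixD (n : ℕ) (b t : ℕ → Bool) : ℕ → Bool := fun i =>
  if i < n then b i else if i % 2 = 1 ∧ n ≤ (i - 1) / 2 then t ((i - 1) / 2 - n) else false

def mixT (n : ℕ) (b t : ℕ → Bool) : ℕ → Bool := fun i =>
  if i < n then b i else if i % 2 = 1 ∧ n ≤ (i - 1) / 2 then t ((i - 1) / 2 - n) else true

lemma mixD_agree (n : ℕ) (b t : ℕ → Bool) : ∀ i, i < n → mixD n b t i = b i :=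
  fun i hi => by simp [mixD, hi]

lemma mixT_agree (n : ℕ) (b t : ℕ → Bool) : ∀ i, i < n → mixT n b t i = b i :=
  fun i hi => by simp [mixT, hi]

lemma mix_slot (n j : ℕ) : ¬ (2 * (j + n) + 1 < n) ∧ (2 * (j + n) + 1) % 2 = 1
    ∧ n ≤ ((2 * (j + n) + 1) - 1) / 2 ∧ ((2 * (j + n) + 1) - 1) / 2 - n = j := by
  refine ⟨by omega, by omega, by omega, by omega⟩

lemma mixD_eval (n : ℕ) (b t : ℕ → Bool) (j : ℕ) : mixD n b t (2 * (j + n) + 1) = t j := by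
  obtain ⟨h1, h2, h3, h4⟩ := mix_slot n j
  simp [mixD, h1, h2, h3, h4]

lemma mixT_eval (n : ℕ) (b t : ℕ → Bool) (j : ℕ) : mixT n b t (2 * (j + n) + 1) = t j := by
  obtain ⟨h1, h2, h3, h4⟩ := mix_slot n j
  simp [mixT, h1, h2, h3, h4]

lemma mixD_inj (n : ℕ) (b : ℕ → Bool) : Function.Injective (mixD n b) := by
  intro t t' h
  funext j
  have := congrFun h (2 * (j + n) + 1)
  rwa [mixD_eval, mixD_eval] at this

lemma mixT_inj (n : ℕ) (b : ℕ → Bool) : Function.Injective (mixT n b) := by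
  intro t t' h
  funext j
  have := congrFun h (2 * (j + n) + 1)
  rwa [mixT_eval, mixT_eval] at this

lemma mixD_mem (n : ℕ) (b t : ℕ → Bool) : mixD n b t ∈ Kseq n := by
  intro i hi he
  have h1 : ¬ i < n := by omega
  have h2 : ¬ i % 2 = 1 := by omega
  simp [mixD, h1, h2]

lemma mixT_not_mem (n : ℕ) (b t : ℕ → Bool) (m : ℕ) : mixT n b t ∉ Kseq m := by
  intro hm
  have := hm (2 * (n + m)) (by omega) (by omega)
  have h1 : ¬ 2 * (n + m) < n := by omega
  have h2 : ¬ (2 * (n + m)) % 2 = 1 := by omega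
  simp [mixT, h1, h2] at this

lemma not_countable_inter_D {O : Set ↥cantorSet} (hO : IsOpen O) {x : ↥cantorSet}
    (hx : x ∈ O) : ¬ (O ∩ Dsub).Countable := by
  obtain ⟨n, b, hkey⟩ := key hO hx
  intro hc
  apply uncountable_pibool
  have hinj : Function.Injective (fun t => cg (mixD n b t)) :=
    cg_injective.comp (mixD_inj n b)
  have hsub : Set.univ ⊆ (fun t => cg (mixD n b t)) ⁻¹' (O ∩ Dsub) := by
    intro t _
    refine ⟨hkey _ (mixD_agree n b t), Set.mem_iUnion.mpr ⟨n, ⟨mixD n b t, mixD_mem n b t, rfl⟩⟩⟩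
  exact (hc.preimage hinj).mono hsub

lemma not_countable_inter_Dc {O : Set ↥cantorSet} (hO : IsOpen O) {x : ↥cantorSet}
    (hx : x ∈ O) : ¬ (O ∩ Dsubᶜ).Countable := by
  obtain ⟨n, b, hkey⟩ := key hO hx
  intro hc
  apply uncountable_pibool
  have hinj : Function.Injective (fun t => cg (mixT n b t)) :=
    cg_injective.comp (mixT_inj n b)
  have hsub : Set.univ ⊆ (fun t => cg (mixT n b t)) ⁻¹' (O ∩ Dsubᶜ) := by
    intro t _
    refine ⟨hkey _ (mixT_agree n b t), ?_⟩
    intro hmem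
    obtain ⟨m, a, ham, hae⟩ := Set.mem_iUnion.mp hmem
    have : a = mixT n b t := cg_injective hae
    rw [this] at ham
    exact mixT_not_mem n b t m ham
  exact (hc.preimage hinj).mono hsub

lemma baireOne_indicator {X : Type*} [MetricSpace X] {F : Set X} (hF : IsClosed F)
    (hne : F.Nonempty) : BaireOne (Set.indicator F (fun _ => (1:ℝ))) := by
  refine ⟨fun m x => max (1 - m * Metric.infDist x F) 0, fun m => ?_, fun x => ?_⟩
  · exact (continuous_const.sub (continuous_const.mul
      (Metric.continuous_infDist_pt F))).max continuous_const
  · by_cases hx : x ∈ F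
    · rw [Set.indicator_of_mem hx]
      have h0 : Metric.infDist x F = 0 := Metric.infDist_zero_of_mem hx
      have : (fun m : ℕ => max (1 - m * Metric.infDist x F) 0) = fun _ => (1:ℝ) := by
        funext m; rw [h0]; norm_num
      rw [this]
      exact tendsto_const_nhds
    · rw [Set.indicator_of_notMem hx]
      have hd : 0 < Metric.infDist x F := by
        rwa [← hF.notMem_iff_infDist_pos hne]
      apply tendsto_const_nhds.congr'
      filter_upwards [eventually_ge_atTop (Nat.ceil (1 / Metric.infDist x F))] with m hm
      have : (1:ℝ) ≤ m * Metric.infDist x F := by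
        rw [← div_le_iff₀ hd] at *
        calc (1:ℝ) / Metric.infDist x F ≤ Nat.ceil (1 / Metric.infDist x F) := Nat.le_ceil _
          _ ≤ m := by exact_mod_cast hm
      rw [max_eq_right (by linarith)]

noncomputable def gfun : ↥cantorSet → ℝ := Set.indicator Dsub (fun _ => (1:ℝ))

lemma interior_singleton_cantor (x : ↥cantorSet) : interior ({x} : Set ↥cantorSet) = ∅ := by
  by_contra h
  obtain ⟨y, hy⟩ := Set.nonempty_iff_ne_empty.mpr h
  have := not_countable_inter_D isOpen_interior hy
  exact this (((Set.countable_singleton x).mono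
    (Set.inter_subset_left.trans interior_subset)))

lemma nonempty_sep {O : Set ↥cantorSet} {S A : Set ↥cantorSet} (hA : A.Countable)
    (h : ¬ (O ∩ S).Countable) : ∃ z, z ∈ O ∧ z ∈ S ∧ z ∉ A := by
  by_contra hc
  push_neg at hc
  exact h (hA.mono (fun z hz => hc z hz.1 hz.2))

theorem negpart (A : Set ↥cantorSet) (hA : A.Countable) :
    ¬ BaireOne (fun x : ↥(Aᶜ) => gfun ↑x) := by
  haveI : CompleteSpace ↥cantorSet := isClosed_cantorSet.completeSpace_coe
  rintro ⟨fs, hfc, hfconv⟩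
  let X := ↥(Aᶜ)
  let incl : X → ↥cantorSet := fun x => ↑x
  -- the "Cauchy" sets
  set E : ℕ → Set X := fun n =>
    {x | ∀ p q, n ≤ p → n ≤ q → |fs p x - fs q x| ≤ 1/3} with hE
  have hEclosed : ∀ n, IsClosed (E n) := by
    intro n
    have : E n = ⋂ (p) (q) (_ : n ≤ p) (_ : n ≤ q), {x | |fs p x - fs q x| ≤ 1/3} := by
      ext x; simp only [hE, Set.mem_iInter, Set.mem_setOf_eq]; exact Iff.rfl
    rw [this]
    refine isClosed_iInter fun p => isClosed_iInter fun q =>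
      isClosed_iInter fun _ => isClosed_iInter fun _ => ?_
    exact isClosed_le (((hfc p).sub (hfc q)).abs) continuous_const
  have hEcover : ∀ x : X, ∃ n, x ∈ E n := by
    intro x
    have hcs : CauchySeq (fun p => fs p x) := (hfconv x).cauchySeq
    obtain ⟨N, hN⟩ := Metric.cauchySeq_iff.mp hcs (1/3) (by norm_num)
    exact ⟨N, fun p q hp hq => by
      have := hN p hp q hq
      rw [Real.dist_eq] at this
      linarith⟩
  -- closures in the Cantor set
  set F : ℕ → Set ↥cantorSet := fun n => closure (incl '' E n) with hF
  -- countable closed cover of the Cantor set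
  obtain ⟨e, he⟩ : ∃ e : ℕ → Set ↥cantorSet,
      (∀ k, IsClosed (e k) ∧ interior (e k) = ∅) ∧ A ⊆ ⋃ k, e k := by
    rcases A.eq_empty_or_nonempty with hAe | hAne
    · exact ⟨fun _ => ∅, fun k => ⟨isClosed_empty, interior_empty⟩, by simp [hAe]⟩
    · obtain ⟨u, hu⟩ := hA.exists_eq_range hAne
      refine ⟨fun k => {u k}, fun k => ⟨isClosed_singleton, interior_singleton_cantor _⟩, ?_⟩
      rw [hu]
      intro z hz
      obtain ⟨k, hk⟩ := hz
      exact Set.mem_iUnion.mpr ⟨k, by simp [← hk]⟩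
  have hcover : ⋃ i, Sum.elim F e i = Set.univ := by
    apply Set.eq_univ_of_forall
    intro z
    by_cases hz : z ∈ A
    · obtain ⟨k, hk⟩ := Set.mem_iUnion.mp (he.2 hz)
      exact Set.mem_iUnion.mpr ⟨Sum.inr k, hk⟩
    · obtain ⟨n, hn⟩ := hEcover ⟨z, hz⟩
      exact Set.mem_iUnion.mpr ⟨Sum.inl n,
        subset_closure (Set.mem_image_of_mem incl hn)⟩
  haveI : Nonempty ↥cantorSet := ⟨⟨0, zero_mem_cantorSet⟩⟩
  obtain ⟨i, hi⟩ := nonempty_interior_of_iUnion_of_closed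
    (f := Sum.elim F e)
    (fun i => by rcases i with n | k
                 · exact isClosed_closure
                 · exact (he.1 k).1) hcover
  obtain ⟨n, hi⟩ : ∃ n, (interior (F n)).Nonempty := by
    rcases i with n | k
    · exact ⟨n, hi⟩
    · rw [Sum.elim_inr, (he.1 k).2] at hi
      exact absurd hi (by simp)
  set V := interior (F n) with hV
  have hVopen : IsOpen V := isOpen_interior
  -- preimage of V is inside E n
  have hUsub : ∀ x : X, incl x ∈ V → x ∈ E n := by
    intro x hx
    rw [← (hEclosed n).closure_eq]
    rw [mem_closure_iff]
    intro W hW hxW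
    obtain ⟨O', hO', hO'eq⟩ := isOpen_induced_iff.mp hW
    have hzc : incl x ∈ closure (incl '' E n) := interior_subset hx
    have : ((O' ∩ V) ∩ (incl '' E n)).Nonempty := by
      rw [mem_closure_iff] at hzc
      apply hzc
      · exact hO'.inter hVopen
      · exact ⟨by rw [← hO'eq] at hxW; exact hxW, hx⟩
    obtain ⟨w, ⟨hw1, hw2⟩, y, hy, hyw⟩ := this
    refine ⟨y, ?_, hy⟩
    rw [← hO'eq]
    show incl y ∈ O'
    rw [hyw]; exact hw1
  -- pick a point of V outside Dsub and outside A
  obtain ⟨v₀, hv₀⟩ := hi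
  obtain ⟨z₀, hz₀V, hz₀D, hz₀A⟩ :=
    nonempty_sep hA (not_countable_inter_Dc hVopen hv₀)
  have hz₀c : z₀ ∈ Aᶜ := hz₀A
  set xz : X := ⟨z₀, hz₀c⟩ with hxz
  have hxzE : xz ∈ E n := hUsub xz hz₀V
  have hbound : ∀ x : X, x ∈ E n → |gfun ↑x - fs n x| ≤ 1/3 := by
    intro x hx
    have ht : Tendsto (fun p => |fs p x - fs n x|) atTop (𝓝 |gfun ↑x - fs n x|) :=
      ((hfconv x).sub tendsto_const_nhds).abs
    apply le_of_tendsto ht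
    filter_upwards [eventually_ge_atTop n] with p hp
    exact hx p n hp le_rfl
  have h0 : gfun ↑xz = 0 := Set.indicator_of_notMem hz₀D _
  have hb0 : |fs n xz| ≤ 1/3 := by
    have := hbound xz hxzE
    rw [h0] at this
    simpa using this
  have hWopen : IsOpen ({x : X | |fs n x - fs n xz| < 1/3} ∩ (incl ⁻¹' V)) := by
    refine IsOpen.inter ?_ (hVopen.preimage continuous_subtype_val)
    exact isOpen_lt (((hfc n).sub continuous_const).abs) continuous_const
  obtain ⟨O₂, hO₂, hO₂eq⟩ := isOpen_induced_iff.mp hWopen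
  have hz₀O₂ : z₀ ∈ O₂ := by
    have hxzW : xz ∈ {x : X | |fs n x - fs n xz| < 1/3} ∩ (incl ⁻¹' V) := ⟨by simp, hz₀V⟩
    rw [← hO₂eq] at hxzW
    exact hxzW
  obtain ⟨z₁, hz₁O, hz₁D, hz₁A⟩ := nonempty_sep hA (not_countable_inter_D hO₂ hz₀O₂)
  have hz₁c : z₁ ∈ Aᶜ := hz₁A
  set x1 : X := ⟨z₁, hz₁c⟩ with hx1
  have hx1W : x1 ∈ {x : X | |fs n x - fs n xz| < 1/3} ∩ (incl ⁻¹' V) := by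
    rw [← hO₂eq]
    exact hz₁O
  have hx1E : x1 ∈ E n := hUsub x1 hx1W.2
  have h1 : gfun ↑x1 = 1 := Set.indicator_of_mem hz₁D _
  have hb1 : |1 - fs n x1| ≤ 1/3 := by
    have := hbound x1 hx1E
    rw [h1] at this
    exact this
  have hclose : |fs n x1 - fs n xz| < 1/3 := hx1W.1
  rw [abs_le] at hb0 hb1
  rw [abs_lt] at hclose
  linarith


noncomputable def gseq (n : ℕ) : ↥cantorSet → ℝ :=
  Set.indicator (cg '' Kseq n) (fun _ => (1:ℝ))

lemma gseq_baireOne (n : ℕ) : BaireOne (gseq n) :=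
  baireOne_indicator (image_isClosed n) ((Kseq_nonempty n).image cg)

lemma gseq_tendsto (x : ↥cantorSet) :
    Tendsto (fun n => gseq n x) atTop (𝓝 (gfun x)) := by
  by_cases hx : x ∈ Dsub
  · obtain ⟨m, hm⟩ := Set.mem_iUnion.mp hx
    rw [show gfun x = 1 from by unfold gfun; exact Set.indicator_of_mem hx _]
    apply tendsto_const_nhds.congr'
    filter_upwards [eventually_ge_atTop m] with k hk
    simp only [gseq]
    exact (Set.indicator_of_mem (Set.image_mono (Kseq_mono hk) hm) (fun _ => (1:ℝ))).symm
  · rw [show gfun x = 0 from by unfold gfun; exact Set.indicator_of_notMem hx _]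
    apply tendsto_const_nhds.congr
    intro k
    simp only [gseq]
    refine (Set.indicator_of_notMem (fun hmem => hx ?_) (fun _ => (1:ℝ))).symm
    exact Set.mem_iUnion.mpr ⟨k, hmem⟩

/-- There is a function `g : C → ℝ` of the second Baire class on the Cantor set
`C` such that for every countable `A ⊆ C` the restriction of `g` to `C \ A` is not of the
first Baire class. -/
theorem stmt15 :
    ∃ g : ↥cantorSet → ℝ,
      (∃ gs : ℕ → ↥cantorSet → ℝ, (∀ n, BaireOne (gs n)) ∧
        ∀ x, Tendsto (fun n => gs n x) atTop (𝓝 (g x))) ∧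
      ∀ A : Set ↥cantorSet, A.Countable →
        ¬ BaireOne (fun x : ↥(Aᶜ) => g ↑x) :=
  ⟨gfun, ⟨gseq, gseq_baireOne, gseq_tendsto⟩, fun A hA => negpart A hA⟩
end
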